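/- arXiv:2408.09907 — 4 statements merged into one kernel-verified Lean document; each statement's English description precedes it below -/
import Mathlib

section
/- Let ε > 0, let Ω ⊆ ℝ² be open, and let p, q : Ω → ℝ be smooth solutions of the heat equation p_t = (ε/2) p_xx, q_t = (ε/2) q_xx on Ω, with p strictly positive. Define u = −ε p_x / p and ρ = (q/p)_x. Then ρ satisfies the continuity equation with viscosity: ρ_t + (ρ u)_x = (ε/2) ρ_xx on Ω. -/
open Set

/-- Partial derivative in the first (space) variable. -/
noncomputable def pdx (f : ℝ → ℝ → ℝ) (x t : ℝ) : ℝ := deriv (fun x' => f x' t) x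

/-- Partial derivative in the second (time) variable. -/
noncomputable def pdt (f : ℝ → ℝ → ℝ) (x t : ℝ) : ℝ := deriv (fun t' => f x t') t

/-- Second partial derivative in the first (space) variable. -/
noncomputable def pdxx (f : ℝ → ℝ → ℝ) (x t : ℝ) : ℝ := deriv (fun x' => pdx f x' t) x

namespace HCAux

lemma one_le_inf : (1 : WithTop ℕ∞) ≤ ((⊤ : ℕ∞) : WithTop ℕ∞) := by
  exact_mod_cast le_top

lemma inf_add_one : ((⊤ : ℕ∞) : WithTop ℕ∞) + 1 ≤ ((⊤ : ℕ∞) : WithTop ℕ∞) := by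
  norm_num

variable {Ω : Set (ℝ × ℝ)} {f : ℝ → ℝ → ℝ} {x t : ℝ}

lemma slice_x' (hΩ : IsOpen Ω)
    (hf : ContDiffOn ℝ ((⊤ : ℕ∞) : WithTop ℕ∞) (fun z : ℝ × ℝ => f z.1 z.2) Ω)
    (hz : (x, t) ∈ Ω) :
    HasDerivAt (fun x' => f x' t)
      (fderiv ℝ (fun z : ℝ × ℝ => f z.1 z.2) (x, t) ((1 : ℝ), (0 : ℝ))) x := by
  have hd : DifferentiableAt ℝ (fun z : ℝ × ℝ => f z.1 z.2) (x, t) :=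
    (hf.contDiffAt (hΩ.mem_nhds hz)).differentiableAt (by simp)
  have hL : HasDerivAt (fun x' : ℝ => ((x' : ℝ), t)) ((1 : ℝ), (0 : ℝ)) x :=
    (hasDerivAt_id x).prodMk (hasDerivAt_const x t)
  exact hd.hasFDerivAt.comp_hasDerivAt x hL

lemma slice_t' (hΩ : IsOpen Ω)
    (hf : ContDiffOn ℝ ((⊤ : ℕ∞) : WithTop ℕ∞) (fun z : ℝ × ℝ => f z.1 z.2) Ω)
    (hz : (x, t) ∈ Ω) :
    HasDerivAt (fun t' => f x t')
      (fderiv ℝ (fun z : ℝ × ℝ => f z.1 z.2) (x, t) ((0 : ℝ), (1 : ℝ))) t := by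
  have hd : DifferentiableAt ℝ (fun z : ℝ × ℝ => f z.1 z.2) (x, t) :=
    (hf.contDiffAt (hΩ.mem_nhds hz)).differentiableAt (by simp)
  have hL : HasDerivAt (fun t' : ℝ => ((x : ℝ), t')) ((0 : ℝ), (1 : ℝ)) t :=
    (hasDerivAt_const t x).prodMk (hasDerivAt_id t)
  exact hd.hasFDerivAt.comp_hasDerivAt t hL

lemma pdx_eq (hΩ : IsOpen Ω)
    (hf : ContDiffOn ℝ ((⊤ : ℕ∞) : WithTop ℕ∞) (fun z : ℝ × ℝ => f z.1 z.2) Ω)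
    (hz : (x, t) ∈ Ω) :
    pdx f x t = fderiv ℝ (fun z : ℝ × ℝ => f z.1 z.2) (x, t) ((1 : ℝ), (0 : ℝ)) :=
  (slice_x' hΩ hf hz).deriv

lemma pdt_eq (hΩ : IsOpen Ω)
    (hf : ContDiffOn ℝ ((⊤ : ℕ∞) : WithTop ℕ∞) (fun z : ℝ × ℝ => f z.1 z.2) Ω)
    (hz : (x, t) ∈ Ω) :
    pdt f x t = fderiv ℝ (fun z : ℝ × ℝ => f z.1 z.2) (x, t) ((0 : ℝ), (1 : ℝ)) :=
  (slice_t' hΩ hf hz).deriv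

lemma slice_x (hΩ : IsOpen Ω)
    (hf : ContDiffOn ℝ ((⊤ : ℕ∞) : WithTop ℕ∞) (fun z : ℝ × ℝ => f z.1 z.2) Ω)
    (hz : (x, t) ∈ Ω) :
    HasDerivAt (fun x' => f x' t) (pdx f x t) x := by
  rw [pdx_eq hΩ hf hz]; exact slice_x' hΩ hf hz

lemma slice_t (hΩ : IsOpen Ω)
    (hf : ContDiffOn ℝ ((⊤ : ℕ∞) : WithTop ℕ∞) (fun z : ℝ × ℝ => f z.1 z.2) Ω)
    (hz : (x, t) ∈ Ω) :
    HasDerivAt (fun t' => f x t') (pdt f x t) t := by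
  rw [pdt_eq hΩ hf hz]; exact slice_t' hΩ hf hz

lemma contDiffOn_pdx (hΩ : IsOpen Ω)
    (hf : ContDiffOn ℝ ((⊤ : ℕ∞) : WithTop ℕ∞) (fun z : ℝ × ℝ => f z.1 z.2) Ω) :
    ContDiffOn ℝ ((⊤ : ℕ∞) : WithTop ℕ∞) (fun z : ℝ × ℝ => pdx f z.1 z.2) Ω := by
  have hG : ContDiffOn ℝ ((⊤ : ℕ∞) : WithTop ℕ∞)
      (fderiv ℝ (fun z : ℝ × ℝ => f z.1 z.2)) Ω := hf.fderiv_of_isOpen hΩ inf_add_one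
  have hGv := hG.clm_apply (contDiffOn_const (c := ((1 : ℝ), (0 : ℝ))))
  exact hGv.congr fun z hz => by
    have hz' : (z.1, z.2) ∈ Ω := by simpa using hz
    simpa using pdx_eq hΩ hf hz'

lemma contDiffOn_pdt (hΩ : IsOpen Ω)
    (hf : ContDiffOn ℝ ((⊤ : ℕ∞) : WithTop ℕ∞) (fun z : ℝ × ℝ => f z.1 z.2) Ω) :
    ContDiffOn ℝ ((⊤ : ℕ∞) : WithTop ℕ∞) (fun z : ℝ × ℝ => pdt f z.1 z.2) Ω := by
  have hG : ContDiffOn ℝ ((⊤ : ℕ∞) : WithTop ℕ∞)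
      (fderiv ℝ (fun z : ℝ × ℝ => f z.1 z.2)) Ω := hf.fderiv_of_isOpen hΩ inf_add_one
  have hGv := hG.clm_apply (contDiffOn_const (c := ((0 : ℝ), (1 : ℝ))))
  exact hGv.congr fun z hz => by
    have hz' : (z.1, z.2) ∈ Ω := by simpa using hz
    simpa using pdt_eq hΩ hf hz'

lemma ev_x (hΩ : IsOpen Ω) (hz : (x, t) ∈ Ω) : ∀ᶠ x' in nhds x, (x', t) ∈ Ω := by
  have h : ∀ᶠ y in nhds ((x : ℝ), t), y ∈ Ω := hΩ.mem_nhds hz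
  exact ((continuous_id.prodMk continuous_const).tendsto x).eventually h

lemma ev_t (hΩ : IsOpen Ω) (hz : (x, t) ∈ Ω) : ∀ᶠ t' in nhds t, (x, t') ∈ Ω := by
  have h : ∀ᶠ y in nhds ((x : ℝ), t), y ∈ Ω := hΩ.mem_nhds hz
  exact ((continuous_const.prodMk continuous_id).tendsto t).eventually h

lemma schwarz (hΩ : IsOpen Ω)
    (hf : ContDiffOn ℝ ((⊤ : ℕ∞) : WithTop ℕ∞) (fun z : ℝ × ℝ => f z.1 z.2) Ω)
    (hz : (x, t) ∈ Ω) :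
    pdt (fun a b => pdx f a b) x t = pdx (fun a b => pdt f a b) x t := by
  set F : ℝ × ℝ → ℝ := fun z => f z.1 z.2 with hF
  have hG : ContDiffOn ℝ ((⊤ : ℕ∞) : WithTop ℕ∞) (fderiv ℝ F) Ω :=
    hf.fderiv_of_isOpen hΩ inf_add_one
  have hGd : DifferentiableAt ℝ (fderiv ℝ F) (x, t) :=
    (hG.contDiffAt (hΩ.mem_nhds hz)).differentiableAt (by simp)
  have hev : ∀ᶠ y in nhds ((x : ℝ), t), HasFDerivAt F (fderiv ℝ F y) y := by
    filter_upwards [hΩ.mem_nhds hz] with y hy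
    exact ((hf.contDiffAt (hΩ.mem_nhds hy)).differentiableAt (by simp)).hasFDerivAt
  have hsymm := second_derivative_symmetric_of_eventually hev hGd.hasFDerivAt
  have happ : ∀ v : ℝ × ℝ, HasFDerivAt (fun z : ℝ × ℝ => fderiv ℝ F z v)
      ((ContinuousLinearMap.apply ℝ ℝ v).comp (fderiv ℝ (fderiv ℝ F) (x, t))) (x, t) :=
    fun v => (ContinuousLinearMap.apply ℝ ℝ v).hasFDerivAt.comp (x, t) hGd.hasFDerivAt
  have hGv : ∀ v : ℝ × ℝ, ContDiffOn ℝ ((⊤ : ℕ∞) : WithTop ℕ∞)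
      (fun z : ℝ × ℝ => fderiv ℝ F z v) Ω := fun v => hG.clm_apply contDiffOn_const
  have h1 : pdt (fun a b => pdx f a b) x t
      = fderiv ℝ (fun z : ℝ × ℝ => fderiv ℝ F z ((1 : ℝ), (0 : ℝ))) (x, t) ((0 : ℝ), (1 : ℝ)) := by
    have he : (fun t' => pdx f x t') =ᶠ[nhds t]
        (fun t' => fderiv ℝ F (x, t') ((1 : ℝ), (0 : ℝ))) := by
      filter_upwards [ev_t hΩ hz] with t' ht'
      exact pdx_eq hΩ hf ht'
    have := pdt_eq (f := fun a b => fderiv ℝ F (a, b) ((1 : ℝ), (0 : ℝ))) hΩ (hGv _) hz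
    calc pdt (fun a b => pdx f a b) x t
        = deriv (fun t' => fderiv ℝ F (x, t') ((1 : ℝ), (0 : ℝ))) t := he.deriv_eq
      _ = _ := this
  have h2 : pdx (fun a b => pdt f a b) x t
      = fderiv ℝ (fun z : ℝ × ℝ => fderiv ℝ F z ((0 : ℝ), (1 : ℝ))) (x, t) ((1 : ℝ), (0 : ℝ)) := by
    have he : (fun x' => pdt f x' t) =ᶠ[nhds x]
        (fun x' => fderiv ℝ F (x', t) ((0 : ℝ), (1 : ℝ))) := by
      filter_upwards [ev_x hΩ hz] with x' hx'
      exact pdt_eq hΩ hf hx'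
    have := pdx_eq (f := fun a b => fderiv ℝ F (a, b) ((0 : ℝ), (1 : ℝ))) hΩ (hGv _) hz
    calc pdx (fun a b => pdt f a b) x t
        = deriv (fun x' => fderiv ℝ F (x', t) ((0 : ℝ), (1 : ℝ))) x := he.deriv_eq
      _ = _ := this
  rw [h1, h2, (happ _).fderiv, (happ _).fderiv]
  exact hsymm _ _


lemma phi_zero {Ω : Set (ℝ × ℝ)} (hΩ : IsOpen Ω) (ε : ℝ)
    {p q : ℝ → ℝ → ℝ}
    (hp : ContDiffOn ℝ ((⊤ : ℕ∞) : WithTop ℕ∞) (fun z : ℝ × ℝ => p z.1 z.2) Ω)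
    (hq : ContDiffOn ℝ ((⊤ : ℕ∞) : WithTop ℕ∞) (fun z : ℝ × ℝ => q z.1 z.2) Ω)
    (hpos : ∀ x t : ℝ, (x, t) ∈ Ω → 0 < p x t)
    (hpheat : ∀ x t : ℝ, (x, t) ∈ Ω → pdt p x t = ε / 2 * pdxx p x t)
    (hqheat : ∀ x t : ℝ, (x, t) ∈ Ω → pdt q x t = ε / 2 * pdxx q x t)
    {a b : ℝ} (hab : (a, b) ∈ Ω) :
    pdt (fun a b => q a b / p a b) a b
      + pdx (fun a b => q a b / p a b) a b * (-ε * pdx p a b / p a b)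
    = ε / 2 * pdxx (fun a b => q a b / p a b) a b := by
  have hPne : p a b ≠ 0 := ne_of_gt (hpos a b hab)
  have hpd : HasDerivAt (fun x' => p x' b) (pdx p a b) a := slice_x hΩ hp hab
  have hqd : HasDerivAt (fun x' => q x' b) (pdx q a b) a := slice_x hΩ hq hab
  have hpt : HasDerivAt (fun t' => p a t') (pdt p a b) b := slice_t hΩ hp hab
  have hqt : HasDerivAt (fun t' => q a t') (pdt q a b) b := slice_t hΩ hq hab
  have hp2 : HasDerivAt (fun x' => pdx p x' b) (pdxx p a b) a :=
    slice_x hΩ (contDiffOn_pdx hΩ hp) hab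
  have hq2 : HasDerivAt (fun x' => pdx q x' b) (pdxx q a b) a :=
    slice_x hΩ (contDiffOn_pdx hΩ hq) hab
  have hRx : pdx (fun a b => q a b / p a b) a b
      = (pdx q a b * p a b - q a b * pdx p a b) / p a b ^ 2 :=
    (hqd.div hpd hPne).deriv
  have hRt : pdt (fun a b => q a b / p a b) a b
      = (pdt q a b * p a b - q a b * pdt p a b) / p a b ^ 2 :=
    (hqt.div hpt hPne).deriv
  have hbig := ((hq2.mul hpd).sub (hqd.mul hp2)).div (hpd.pow 2) (pow_ne_zero 2 hPne)
  have he : (fun x' => pdx (fun a b => q a b / p a b) x' b) =ᶠ[nhds a]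
      (fun x' => (pdx q x' b * p x' b - q x' b * pdx p x' b) / p x' b ^ 2) := by
    filter_upwards [ev_x hΩ hab] with y hy
    exact ((slice_x hΩ hq hy).div (slice_x hΩ hp hy) (ne_of_gt (hpos y b hy))).deriv
  have hRxx : pdxx (fun a b => q a b / p a b) a b
      = ((pdxx q a b * p a b + pdx q a b * pdx p a b
          - (pdx q a b * pdx p a b + q a b * pdxx p a b)) * p a b ^ 2
          - (pdx q a b * p a b - q a b * pdx p a b)
            * ((2 : ℕ) * p a b ^ (2 - 1) * pdx p a b)) / (p a b ^ 2) ^ 2 := by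
    show deriv (fun x' => pdx (fun a b => q a b / p a b) x' b) a = _
    rw [he.deriv_eq]
    exact hbig.deriv
  rw [hRx, hRt, hRxx, hpheat a b hab, hqheat a b hab]
  field_simp
  ring
end HCAux

open HCAux

/-- If `p, q` are smooth solutions of the heat equation `p_t = (ε/2) p_xx`,
`q_t = (ε/2) q_xx` on an open set `Ω ⊆ ℝ²` with `p > 0`, then
`u = -ε p_x/p` and `ρ = (q/p)_x` satisfy the viscous continuity equation
`ρ_t + (ρ u)_x = (ε/2) ρ_xx` on `Ω`. -/
theorem hopf_cole_solves_continuity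
    (ε : ℝ) (hε : 0 < ε) (Ω : Set (ℝ × ℝ)) (hΩ : IsOpen Ω)
    (p q : ℝ → ℝ → ℝ)
    (hp : ContDiffOn ℝ (⊤ : ℕ∞) (fun z : ℝ × ℝ => p z.1 z.2) Ω)
    (hq : ContDiffOn ℝ (⊤ : ℕ∞) (fun z : ℝ × ℝ => q z.1 z.2) Ω)
    (hpos : ∀ x t : ℝ, (x, t) ∈ Ω → 0 < p x t)
    (hpheat : ∀ x t : ℝ, (x, t) ∈ Ω → pdt p x t = ε / 2 * pdxx p x t)
    (hqheat : ∀ x t : ℝ, (x, t) ∈ Ω → pdt q x t = ε / 2 * pdxx q x t) :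
    ∀ x t : ℝ, (x, t) ∈ Ω →
      pdt (fun x' t' => pdx (fun a b => q a b / p a b) x' t') x t
        + pdx (fun x' t' =>
            pdx (fun a b => q a b / p a b) x' t' * (-ε * pdx p x' t' / p x' t')) x t
      = ε / 2 * pdxx (fun x' t' => pdx (fun a b => q a b / p a b) x' t') x t := by
  intro x t hz
  have hp' : ContDiffOn ℝ ((⊤ : ℕ∞) : WithTop ℕ∞) (fun z : ℝ × ℝ => p z.1 z.2) Ω :=
    hp.of_le (by simp)
  have hq' : ContDiffOn ℝ ((⊤ : ℕ∞) : WithTop ℕ∞) (fun z : ℝ × ℝ => q z.1 z.2) Ω :=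
    hq.of_le (by simp)
  have hne : ∀ z ∈ Ω, p z.1 z.2 ≠ 0 := fun z hzz =>
    ne_of_gt (hpos z.1 z.2 (by simpa using hzz))
  have hR : ContDiffOn ℝ ((⊤ : ℕ∞) : WithTop ℕ∞)
      (fun z : ℝ × ℝ => q z.1 z.2 / p z.1 z.2) Ω := hq'.div hp' hne
  have hu : ContDiffOn ℝ ((⊤ : ℕ∞) : WithTop ℕ∞)
      (fun z : ℝ × ℝ => -ε * pdx p z.1 z.2 / p z.1 z.2) Ω :=
    (contDiffOn_const.mul (contDiffOn_pdx hΩ hp')).div hp' hne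
  have hρ : ContDiffOn ℝ ((⊤ : ℕ∞) : WithTop ℕ∞)
      (fun z : ℝ × ℝ => pdx (fun a b => q a b / p a b) z.1 z.2) Ω :=
    contDiffOn_pdx hΩ hR
  -- Schwarz
  have hsch : pdt (fun a b => pdx (fun a b => q a b / p a b) a b) x t
      = pdx (fun a b => pdt (fun a b => q a b / p a b) a b) x t := schwarz hΩ hR hz
  -- slice derivatives at x
  have hA : HasDerivAt (fun x' => pdt (fun a b => q a b / p a b) x' t)
      (pdx (fun a b => pdt (fun a b => q a b / p a b) a b) x t) x :=
    slice_x hΩ (contDiffOn_pdt hΩ hR) hz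
  have hB : HasDerivAt
      (fun x' => pdx (fun a b => q a b / p a b) x' t * (-ε * pdx p x' t / p x' t))
      (pdx (fun x' t' =>
        pdx (fun a b => q a b / p a b) x' t' * (-ε * pdx p x' t' / p x' t')) x t) x :=
    slice_x (f := fun x' t' =>
        pdx (fun a b => q a b / p a b) x' t' * (-ε * pdx p x' t' / p x' t')) hΩ (hρ.mul hu) hz
  have hC : HasDerivAt (fun x' => pdxx (fun a b => q a b / p a b) x' t)
      (pdxx (fun x' t' => pdx (fun a b => q a b / p a b) x' t') x t) x :=
    slice_x (f := fun x' t' => pdx (fun a b => pdx (fun a b => q a b / p a b) a b) x' t')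
      hΩ (contDiffOn_pdx hΩ hρ) hz
  have hsum := (hA.add hB).sub (hC.const_mul (ε / 2))
  have hev0 : (fun x' => pdt (fun a b => q a b / p a b) x' t
      + pdx (fun a b => q a b / p a b) x' t * (-ε * pdx p x' t / p x' t)
      - ε / 2 * pdxx (fun a b => q a b / p a b) x' t) =ᶠ[nhds x] (fun _ => (0 : ℝ)) := by
    filter_upwards [ev_x hΩ hz] with y hy
    have := phi_zero hΩ ε hp' hq' hpos hpheat hqheat hy
    linarith
  have h0 := hsum.deriv
  simp only [Pi.add_def, Pi.sub_def] at h0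
  rw [hev0.deriv_eq, deriv_const] at h0
  have hsch' : pdt (fun x' t' => pdx (fun a b => q a b / p a b) x' t') x t
      = pdx (fun a b => pdt (fun a b => q a b / p a b) a b) x t := hsch
  linarith [h0, hsch']
end

section
/- Let ε > 0, u_B ∈ ℝ. For x ∈ ℝ, y ≥ 0, t > 0 define K(x,y,t,ε) = (1/√(2πtε)) (e^{−(x−y)²/(2tε)} + e^{−(x+y)²/(2tε)}) + (2u_B/ε) (1/√(2πtε)) ∫₀^∞ e^{−(1/ε)((x+y+z)²/(2t) − u_B z)} dz. Then for every y > 0 and t > 0, the kernel satisfies the Robin boundary condition at x = 0: ε ∂_x K(0,y,t,ε) + u_B K(0,y,t,ε) = 0. -/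
open MeasureTheory Set

/-- The Green's kernel for the heat equation `p_t = (ε/2) p_xx` on the half line
with Robin boundary condition `ε p_x(0,t) + u_B p(0,t) = 0`. -/
noncomputable def heatRobinKernel (ε uB x y t : ℝ) : ℝ :=
  (1 / Real.sqrt (2 * Real.pi * t * ε)) *
      (Real.exp (-(x - y) ^ 2 / (2 * t * ε)) + Real.exp (-(x + y) ^ 2 / (2 * t * ε)))
    + (2 * uB / ε) * (1 / Real.sqrt (2 * Real.pi * t * ε)) *
        ∫ z in Ioi (0:ℝ), Real.exp (-(1 / ε) * ((x + y + z) ^ 2 / (2 * t) - uB * z))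

/-!
Substituting `w = x + y + z`, the Robin integral term of the kernel becomes
`e^{-u_B (x+y)/ε} ∫_{x+y}^∞ e^{-w²/(2tε) + u_B w/ε} dw`, so its `x`-derivative is `-u_B/ε` times
itself minus the Gaussian `e^{-(x+y)²/(2tε)}`. The `x`-derivatives of the two image Gaussians
cancel at `x = 0` because the Gaussian is even; the two remaining terms of `ε ∂ₓK(0)` then cancel
`u_B` times the Robin term and `u_B` times the image terms of `K(0)`.
-/

open Real

section

variable {E : Type*} [NormedAddCommGroup E] [NormedSpace ℝ E]

theorem Function.Even.hasDerivAt_comp_sub_add_comp_add {g : ℝ → E} {g' : E} {y : ℝ}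
    (hg : Function.Even g) (hd : HasDerivAt g g' y) :
    HasDerivAt (fun x => g (x - y) + g (x + y)) 0 0 := by
  have hneg : HasDerivAt g (-g') (-y) := by
    have := HasDerivAt.comp_const_sub 0 (-y) (by rwa [zero_sub, neg_neg])
    simpa only [zero_sub, hg _] using this
  have hsub : HasDerivAt (fun x => g (x - y)) (-g') 0 :=
    HasDerivAt.comp_sub_const 0 y (by rwa [zero_sub])
  have hadd : HasDerivAt (fun x => g (x + y)) g' 0 :=
    HasDerivAt.comp_add_const 0 y (by rwa [zero_add])
  simpa using hsub.fun_add hadd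

theorem integral_Ioi_comp_add_right (f : ℝ → E) (a : ℝ) :
    ∫ z in Ioi (0:ℝ), f (z + a) = ∫ w in Ioi a, f w := by
  have := (measurePreserving_add_right volume a).setIntegral_preimage_emb
    (MeasurableEquiv.addRight a).measurableEmbedding f (Ioi a)
  simpa [preimage_add_const_Ioi] using this

variable [CompleteSpace E]

theorem hasDerivAt_integral_Ioi {f : ℝ → E} (hint : Integrable f) (hcont : Continuous f)
    (a : ℝ) : HasDerivAt (fun s => ∫ w in Ioi s, f w) (-f a) a := by
  have hsplit : (fun s => ∫ w in Ioi s, f w) =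
      fun s => (∫ w in s..0, f w) + ∫ w in Ioi (0:ℝ), f w := by
    funext s
    exact (intervalIntegral.integral_interval_add_Ioi hint.integrableOn hint.integrableOn).symm
  rw [hsplit]
  exact (intervalIntegral.integral_hasDerivAt_left (hcont.intervalIntegrable _ _)
    hcont.aestronglyMeasurable.stronglyMeasurableAtFilter hcont.continuousAt).add_const _

end

theorem integrable_exp_neg_mul_sq_add_mul {b : ℝ} (hb : 0 < b) (c : ℝ) :
    Integrable fun x : ℝ => exp (-b * x ^ 2 + c * x) := by
  have hshift := ((integrable_exp_neg_mul_sq hb).comp_sub_right (c / (2 * b))).const_mul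
    (exp (c ^ 2 / (4 * b)))
  refine hshift.congr (ae_of_all _ fun x => ?_)
  simp only [← exp_add]
  congr 1
  field_simp
  ring

theorem even_exp_neg_sq_div (a : ℝ) : Function.Even fun s : ℝ => exp (-s ^ 2 / a) := by
  intro s
  simp

/-- The `z`-integral of `heatRobinKernel`, as a function of `s = x + y`. -/
noncomputable def robinTailIntegral (ε uB t s : ℝ) : ℝ :=
  ∫ z in Ioi (0:ℝ), exp (-(1 / ε) * ((s + z) ^ 2 / (2 * t) - uB * z))

theorem robinTailIntegral_eq (ε uB t s : ℝ) :
    robinTailIntegral ε uB t s =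
      exp (-(uB / ε) * s) * ∫ w in Ioi s, exp (-(1 / (2 * t * ε)) * w ^ 2 + uB / ε * w) := by
  rw [robinTailIntegral, ← integral_Ioi_comp_add_right _ s, ← integral_const_mul]
  refine integral_congr_ae (ae_of_all _ fun z => ?_)
  dsimp only
  rw [← exp_add]
  congr 1
  ring

theorem hasDerivAt_robinTailIntegral {ε t : ℝ} (hε : 0 < ε) (ht : 0 < t) (uB s : ℝ) :
    HasDerivAt (robinTailIntegral ε uB t)
      (-(uB / ε) * robinTailIntegral ε uB t s - exp (-s ^ 2 / (2 * t * ε))) s := by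
  have hweight := integrable_exp_neg_mul_sq_add_mul (b := 1 / (2 * t * ε)) (by positivity) (uB / ε)
  have htail := hasDerivAt_integral_Ioi hweight (by fun_prop) s
  have hfactor : HasDerivAt (fun s => exp (-(uB / ε) * s)) (exp (-(uB / ε) * s) * -(uB / ε)) s :=
    ((hasDerivAt_id s).const_mul _).exp.congr_deriv (by simp)
  have hprod : exp (-(uB / ε) * s) * exp (-(1 / (2 * t * ε)) * s ^ 2 + uB / ε * s) =
      exp (-s ^ 2 / (2 * t * ε)) := by
    rw [← exp_add]
    ring_nf
  rw [robinTailIntegral_eq ε uB t s, funext (robinTailIntegral_eq ε uB t)]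
  refine (hfactor.mul htail).congr_deriv ?_
  linear_combination -hprod

/-- The kernel satisfies the Robin boundary condition
`ε ∂_x K(0,y,t,ε) + u_B K(0,y,t,ε) = 0` for every `y > 0`, `t > 0`. -/
theorem heatRobinKernel_boundary_condition
    (ε uB : ℝ) (hε : 0 < ε) :
    ∀ y > (0:ℝ), ∀ t > (0:ℝ),
      ε * pdx (fun x' t' => heatRobinKernel ε uB x' y t') 0 t
        + uB * heatRobinKernel ε uB 0 y t = 0 := by
  intro y _ t ht
  set c := 1 / Real.sqrt (2 * Real.pi * t * ε)
  set g : ℝ → ℝ := fun s => exp (-s ^ 2 / (2 * t * ε)) with hg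
  have hK : ∀ x, heatRobinKernel ε uB x y t =
      c * (g (x - y) + g (x + y)) + 2 * uB / ε * c * robinTailIntegral ε uB t (x + y) :=
    fun x => rfl
  have himages : HasDerivAt (fun x => g (x - y) + g (x + y)) 0 0 :=
    (even_exp_neg_sq_div _).hasDerivAt_comp_sub_add_comp_add
      (by fun_prop : DifferentiableAt ℝ g y).hasDerivAt
  have htail := (hasDerivAt_robinTailIntegral hε ht uB (0 + y)).comp_add_const 0 y
  have hderiv := (himages.const_mul c).fun_add (htail.const_mul (2 * uB / ε * c))
  have hreflect : g (0 - y) = g (0 + y) := by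
    rw [zero_sub, zero_add]
    exact even_exp_neg_sq_div _ y
  rw [pdx, funext hK, hderiv.deriv, hK, hreflect, hg]
  field_simp
  ring
end

section
/- Let u_L, u_R, ρ_L, ρ_R ∈ ℝ with u_L > u_R, let x₀ ≥ 0, and set s = (u_L + u_R)/2. Define on ℝ × (0,∞): u(x,t) = u_L and ρ(x,t) = ρ_L for x < s t + x₀, u(x,t) = u_R and ρ(x,t) = ρ_R for x > s t + x₀, and e(t) = (1/2)(u_L − u_R)(ρ_L + ρ_R) t. Then for every φ ∈ C_c^∞(ℝ × (0,∞)): (i) ∫₀^∞ ∫_ℝ (u φ_t + (u²/2) φ_x) dx dt = 0; and (ii) ∫₀^∞ ∫_ℝ ρ (φ_t + u φ_x) dx dt + ∫₀^∞ e(t) (φ_t(s t + x₀, t) + s φ_x(s t + x₀, t)) dt = 0. That is, the pair (u, ρ + e(t) δ_{x = st + x₀}) is a distributional (delta shock) solution of the system u_t + (u²/2)_x = 0, ρ_t + (ρu)_x = 0 on t > 0, where on the shock line the velocity of the delta wave equals s. -/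
open MeasureTheory Set

namespace DeltaShockAux

lemma slice1 {f : ℝ × ℝ → ℝ} (hc : HasCompactSupport f) (t : ℝ) :
    HasCompactSupport (fun y => f (y, t)) := by
  apply HasCompactSupport.intro (K := (fun y : ℝ => ((y, t) : ℝ × ℝ)) ⁻¹' tsupport f)
  · exact (hc.image continuous_fst).of_isClosed_subset
      ((isClosed_tsupport f).preimage (by fun_prop))
      (fun y hy => ⟨(y, t), hy, rfl⟩)
  · intro y hy; exact image_eq_zero_of_notMem_tsupport hy

lemma slice2 {f : ℝ × ℝ → ℝ} (hc : HasCompactSupport f) (y : ℝ) :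
    HasCompactSupport (fun t => f (y, t)) := by
  apply HasCompactSupport.intro (K := (fun t : ℝ => ((y, t) : ℝ × ℝ)) ⁻¹' tsupport f)
  · exact (hc.image continuous_snd).of_isClosed_subset
      ((isClosed_tsupport f).preimage (by fun_prop))
      (fun t ht => ⟨(y, t), ht, rfl⟩)
  · intro t ht; exact image_eq_zero_of_notMem_tsupport ht

lemma integral_deriv_eq_zero {f : ℝ → ℝ} (hf : ContDiff ℝ 1 f) (hc : HasCompactSupport f) :
    (∫ t, deriv f t) = 0 := by
  have hi : Integrable (deriv f) :=
    (hf.continuous_deriv le_rfl).integrable_of_hasCompactSupport hc.deriv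
  rw [← intervalIntegral.integral_Iic_add_Ioi (b := (0:ℝ)) hi.integrableOn hi.integrableOn,
    HasCompactSupport.integral_Iic_deriv_eq hf hc 0,
    HasCompactSupport.integral_Ioi_deriv_eq hf hc 0]
  ring

lemma integral_mul_deriv {f : ℝ → ℝ} (hf : ContDiff ℝ 1 f) (hc : HasCompactSupport f) :
    (∫ t, t * deriv f t) = - ∫ t, f t := by
  have h1 : ContDiff ℝ 1 (fun t : ℝ => t * f t) := contDiff_id.mul hf
  have hc1 : HasCompactSupport (fun t : ℝ => t * f t) := by
    apply hc.mono'
    intro t ht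
    simp only [Function.mem_support] at ht
    exact subset_tsupport f (fun h => ht (by simp [h]))
  have hd : ∀ t : ℝ, deriv (fun t : ℝ => t * f t) t = f t + t * deriv f t := by
    intro t
    have := ((hasDerivAt_id t).mul ((hf.differentiable one_ne_zero t).hasDerivAt)).deriv
    simp only [id, one_mul] at this; exact this
  have h0 := integral_deriv_eq_zero h1 hc1
  rw [funext hd] at h0
  have hif : Integrable f := hf.continuous.integrable_of_hasCompactSupport hc
  have hig : Integrable (fun t : ℝ => t * deriv f t) := by
    apply (continuous_id.mul (hf.continuous_deriv le_rfl)).integrable_of_hasCompactSupport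
    apply hc.deriv.mono'
    intro t ht
    simp only [Function.mem_support] at ht
    exact subset_tsupport _ (fun h => ht (by simp [h]))
  rw [integral_add hif hig] at h0
  linarith

end DeltaShockAux

open DeltaShockAux Filter Topology

/-- **Delta shock wave is a distributional solution**: for `u_L > u_R`, the
piecewise-constant pair with shock `x = s t + x₀`, `s = (u_L+u_R)/2`, together
with the delta wave of strength `e(t) = (1/2)(u_L-u_R)(ρ_L+ρ_R) t` on the shock,
satisfies both equations of `u_t + (u²/2)_x = 0`, `ρ_t + (ρu)_x = 0` in the weak
(distributional) sense for `t > 0`. -/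
theorem delta_shock_is_weak_solution
    (uL uR ρL ρR x₀ : ℝ) (h : uR < uL) (hx₀ : 0 ≤ x₀) :
    let s : ℝ := (uL + uR) / 2
    let u : ℝ → ℝ → ℝ := fun x t => if x < s * t + x₀ then uL else uR
    let ρ : ℝ → ℝ → ℝ := fun x t => if x < s * t + x₀ then ρL else ρR
    let e : ℝ → ℝ := fun t => 1 / 2 * (uL - uR) * (ρL + ρR) * t
    ∀ φ : ℝ → ℝ → ℝ,
      ContDiff ℝ (⊤ : ℕ∞) (fun z : ℝ × ℝ => φ z.1 z.2) →
      HasCompactSupport (fun z : ℝ × ℝ => φ z.1 z.2) →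
      tsupport (fun z : ℝ × ℝ => φ z.1 z.2) ⊆ univ ×ˢ Ioi 0 →
      -- (i) weak form of the Burgers equation
      (∫ t in Ioi (0:ℝ), ∫ x : ℝ,
          (u x t * pdt φ x t + (u x t) ^ 2 / 2 * pdx φ x t)) = 0 ∧
      -- (ii) weak form of the continuity equation including the delta wave
      (∫ t in Ioi (0:ℝ), ∫ x : ℝ, ρ x t * (pdt φ x t + u x t * pdx φ x t))
        + (∫ t in Ioi (0:ℝ),
            e t * (pdt φ (s * t + x₀) t + s * pdx φ (s * t + x₀) t)) = 0 := by
  intro s u ρ e φ hφ hφc hφs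
  have hs : s = (uL + uR) / 2 := rfl
  set Φ : ℝ × ℝ → ℝ := fun z => φ z.1 z.2 with hΦdef
  -- φ vanishes for t ≤ 0
  have hφ0 : ∀ x t : ℝ, t ≤ 0 → φ x t = 0 := by
    intro x t ht
    by_contra hne
    have h1 : (x, t) ∈ tsupport Φ := subset_tsupport _ (by simpa [Φ] using hne)
    have h2 := hφs h1
    rw [Set.mem_prod] at h2
    exact absurd h2.2 (by simpa using ht)
  -- the shifted test function
  set Ψ : ℝ × ℝ → ℝ := fun z => Φ (z.1 + (s * z.2 + x₀), z.2) with hΨdef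
  have hLc : ContDiff ℝ (⊤ : ℕ∞) (fun z : ℝ × ℝ => ((z.1 + (s * z.2 + x₀), z.2) : ℝ × ℝ)) :=
    (contDiff_fst.add ((contDiff_const.mul contDiff_snd).add contDiff_const)).prodMk contDiff_snd
  have hΨ : ContDiff ℝ (⊤ : ℕ∞) Ψ := hφ.comp hLc
  have hΨc : HasCompactSupport Ψ := by
    let L : ℝ × ℝ ≃ₜ ℝ × ℝ :=
      { toFun := fun z => (z.1 + (s * z.2 + x₀), z.2)
        invFun := fun z => (z.1 - (s * z.2 + x₀), z.2)
        left_inv := fun z => by simp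
        right_inv := fun z => by simp
        continuous_toFun := by fun_prop
        continuous_invFun := by fun_prop }
    exact hφc.comp_homeomorph L
  have hΨd : Differentiable ℝ Ψ := hΨ.differentiable (by simp)
  have hΦd : Differentiable ℝ Φ := hφ.differentiable (by simp)
  set A : ℝ × ℝ → ℝ := fun z => fderiv ℝ Ψ z (1, 0) with hA
  set B : ℝ × ℝ → ℝ := fun z => fderiv ℝ Ψ z (0, 1) with hB
  have hderivA : ∀ y t : ℝ, HasDerivAt (fun y' => Ψ (y', t)) (A (y, t)) y := by
    intro y t
    exact (hΨd (y, t)).hasFDerivAt.comp_hasDerivAt y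
      ((hasDerivAt_id y).prodMk (hasDerivAt_const y t))
  have hderivB : ∀ y t : ℝ, HasDerivAt (fun t' => Ψ (y, t')) (B (y, t)) t := by
    intro y t
    exact (hΨd (y, t)).hasFDerivAt.comp_hasDerivAt t
      ((hasDerivAt_const t y).prodMk (hasDerivAt_id t))
  -- pdx/pdt in terms of fderiv of Φ
  have hP : ∀ x t : ℝ, pdx φ x t = fderiv ℝ Φ (x, t) (1, 0) := by
    intro x t
    exact ((hΦd (x, t)).hasFDerivAt.comp_hasDerivAt x
      ((hasDerivAt_id x).prodMk (hasDerivAt_const x t))).deriv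
  have hQ : ∀ x t : ℝ, pdt φ x t = fderiv ℝ Φ (x, t) (0, 1) := by
    intro x t
    exact ((hΦd (x, t)).hasFDerivAt.comp_hasDerivAt t
      ((hasDerivAt_const t x).prodMk (hasDerivAt_id t))).deriv
  -- A, B in terms of pdx, pdt of φ
  have hAeq : ∀ y t : ℝ, A (y, t) = pdx φ (y + (s * t + x₀)) t := by
    intro y t
    have h1 : HasDerivAt (fun y' : ℝ => ((y' + (s * t + x₀), t) : ℝ × ℝ)) (1, 0) y :=
      ((hasDerivAt_id y).add_const _).prodMk (hasDerivAt_const y t)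
    have h2 : HasDerivAt (fun y' => Ψ (y', t))
        (fderiv ℝ Φ (y + (s * t + x₀), t) (1, 0)) y :=
      (hΦd _).hasFDerivAt.comp_hasDerivAt y h1
    rw [hP]
    exact (hderivA y t).unique h2
  have hBeq : ∀ y t : ℝ, B (y, t)
      = s * pdx φ (y + (s * t + x₀)) t + pdt φ (y + (s * t + x₀)) t := by
    intro y t
    have h1 : HasDerivAt (fun t' : ℝ => ((y + (s * t' + x₀), t') : ℝ × ℝ)) (s, 1) t := by
      refine HasDerivAt.prodMk ?_ (hasDerivAt_id t)
      simpa using (((hasDerivAt_id t).const_mul s).add_const x₀).const_add y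
    have h2 : HasDerivAt (fun t' => Ψ (y, t'))
        (fderiv ℝ Φ (y + (s * t + x₀), t) (s, 1)) t :=
      (hΦd _).hasFDerivAt.comp_hasDerivAt t h1
    have h3 := (hderivB y t).unique h2
    have h4 : ((s, 1) : ℝ × ℝ) = s • ((1, 0) : ℝ × ℝ) + ((0, 1) : ℝ × ℝ) := by
      simp [Prod.ext_iff]
    rw [h3, hP, hQ, h4, ContinuousLinearMap.map_add, ContinuousLinearMap.map_smul, smul_eq_mul]
  -- continuity and support of A, B
  have hAcont : Continuous A := (hΨ.continuous_fderiv (by simp)).clm_apply continuous_const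
  have hBcont : Continuous B := (hΨ.continuous_fderiv (by simp)).clm_apply continuous_const
  have hAcs : HasCompactSupport A := hΨc.fderiv_apply ℝ (1, 0)
  have hBcs : HasCompactSupport B := hΨc.fderiv_apply ℝ (0, 1)
  -- vanishing in the past
  have hΨ0 : ∀ z : ℝ × ℝ, z.2 ≤ 0 → Ψ z = 0 := fun z hz => hφ0 _ _ hz
  have hfd0 : ∀ z : ℝ × ℝ, z.2 ≤ 0 → fderiv ℝ Ψ z = 0 := by
    have hlt : Set.EqOn (fderiv ℝ Ψ) 0 {w : ℝ × ℝ | w.2 < 0} := by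
      intro z hz
      have hev : Ψ =ᶠ[nhds z] 0 := by
        filter_upwards [(isOpen_lt continuous_snd continuous_const).mem_nhds hz] with w hw
        exact hΨ0 w (le_of_lt hw)
      rw [hev.fderiv_eq]
      have h00 : (0 : ℝ × ℝ → ℝ) = fun _ => (0:ℝ) := rfl
      rw [h00, fderiv_const_apply]; rfl
    intro z hz
    have hcl : Set.EqOn (fderiv ℝ Ψ) 0 (closure {w : ℝ × ℝ | w.2 < 0}) :=
      hlt.closure (hΨ.continuous_fderiv (by simp)) continuous_const
    apply hcl
    have h1 := (isOpenMap_snd : IsOpenMap (Prod.snd : ℝ × ℝ → ℝ)).preimage_closure_subset_closure_preimage (s := Iio (0 : ℝ))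
    apply h1
    simpa [closure_Iio] using hz
  have hA0 : ∀ z : ℝ × ℝ, z.2 ≤ 0 → A z = 0 := by
    intro z hz; rw [hA]; simp only [hfd0 z hz]; simp
  have hB0 : ∀ z : ℝ × ℝ, z.2 ≤ 0 → B z = 0 := by
    intro z hz; rw [hB]; simp only [hfd0 z hz]; simp
  -- the trace
  set g : ℝ → ℝ := fun t => Ψ (0, t) with hgdef
  have hgsm : ContDiff ℝ 1 g := (hΨ.comp (contDiff_const.prodMk contDiff_id)).of_le (by simp)
  have hgcs : HasCompactSupport g := slice2 hΨc 0
  have hg0 : ∀ t : ℝ, t ≤ 0 → g t = 0 := fun t ht => hΨ0 (0, t) ht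
  have hgderiv : ∀ t : ℝ, HasDerivAt g (B (0, t)) t := fun t => hderivB 0 t
  have hgint : Integrable g := hgsm.continuous.integrable_of_hasCompactSupport hgcs
  -- FTC in space for each t
  have hIicA : ∀ t : ℝ, (∫ y in Iic (0:ℝ), A (y, t)) = g t := by
    intro t
    have hsm : ContDiff ℝ 1 (fun y => Ψ (y, t)) :=
      (hΨ.comp (contDiff_id.prodMk contDiff_const)).of_le (by simp)
    have := HasCompactSupport.integral_Iic_deriv_eq hsm (slice1 hΨc t) 0
    simp_rw [fun y => (hderivA y t).deriv] at this
    exact this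
  have hIoiA : ∀ t : ℝ, (∫ y in Ioi (0:ℝ), A (y, t)) = - g t := by
    intro t
    have hsm : ContDiff ℝ 1 (fun y => Ψ (y, t)) :=
      (hΨ.comp (contDiff_id.prodMk contDiff_const)).of_le (by simp)
    have := HasCompactSupport.integral_Ioi_deriv_eq hsm (slice1 hΨc t) 0
    simp_rw [fun y => (hderivA y t).deriv] at this
    exact this
  -- FTC in time for each y
  have hBzero : ∀ y : ℝ, (∫ t, B (y, t)) = 0 := by
    intro y
    have hsm : ContDiff ℝ 1 (fun t => Ψ (y, t)) :=
      (hΨ.comp (contDiff_const.prodMk contDiff_id)).of_le (by simp)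
    have := integral_deriv_eq_zero hsm (slice2 hΨc y)
    simp_rw [fun t => (hderivB y t).deriv] at this
    exact this
  -- Fubini : the B-marginals integrate to zero
  have hWint : ∀ S : Set ℝ, MeasurableSet S →
      Integrable (fun p : ℝ × ℝ => S.indicator (fun y => B (y, p.1)) p.2) := by
    intro S hS
    have h1 : Integrable (fun p : ℝ × ℝ => B (p.2, p.1)) :=
      (hBcont.comp continuous_swap).integrable_of_hasCompactSupport
        (hBcs.comp_homeomorph (Homeomorph.prodComm ℝ ℝ))
    have h2 : (fun p : ℝ × ℝ => S.indicator (fun y => B (y, p.1)) p.2)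
        = ((univ : Set ℝ) ×ˢ S).indicator (fun p : ℝ × ℝ => B (p.2, p.1)) := by
      funext p
      by_cases hp : p.2 ∈ S <;>
        simp [Set.indicator, hp, Set.mem_prod]
    rw [h2]
    exact h1.indicator (MeasurableSet.univ.prod hS)
  have hmarg : ∀ S : Set ℝ, MeasurableSet S →
      Integrable (fun t : ℝ => ∫ y in S, B (y, t)) := by
    intro S hS
    have h1 : Integrable
        (fun p : ℝ × ℝ => S.indicator (fun y => B (y, p.1)) p.2)
        (volume.prod volume) := hWint S hS
    have h2 := h1.integral_prod_left
    simp_rw [integral_indicator hS] at h2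
    exact h2
  have key0 : ∀ S : Set ℝ, MeasurableSet S →
      (∫ t in Ioi (0:ℝ), ∫ y in S, B (y, t)) = 0 := by
    intro S hS
    have hfull : (∫ t in Ioi (0:ℝ), ∫ y in S, B (y, t)) = ∫ t : ℝ, ∫ y in S, B (y, t) := by
      apply setIntegral_eq_integral_of_forall_compl_eq_zero
      intro t ht
      have ht' : t ≤ 0 := by simpa using ht
      have hz : ∀ y : ℝ, B (y, t) = 0 := fun y => hB0 (y, t) ht'
      simp [hz]
    rw [hfull]
    have hswap : (∫ t : ℝ, ∫ y : ℝ, S.indicator (fun y' => B (y', t)) y)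
        = ∫ y : ℝ, ∫ t : ℝ, S.indicator (fun y' => B (y', t)) y := by
      apply integral_integral_swap
      exact hWint S hS
    have hin : ∀ t : ℝ, (∫ y in S, B (y, t)) = ∫ y : ℝ, S.indicator (fun y' => B (y', t)) y := by
      intro t; rw [integral_indicator hS]
    simp_rw [hin]
    rw [hswap]
    have hz : ∀ y : ℝ, (∫ t : ℝ, S.indicator (fun y' => B (y', t)) y) = 0 := by
      intro y
      by_cases hy : y ∈ S
      · simp only [Set.indicator_of_mem hy]; exact hBzero y
      · simp [Set.indicator_of_notMem hy]
    simp_rw [hz]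
    simp
  -- integrability of B/A slices in y
  have hBslice : ∀ t : ℝ, Integrable (fun y => B (y, t)) := fun t =>
    (hBcont.comp (continuous_id.prodMk continuous_const)).integrable_of_hasCompactSupport
      (slice1 hBcs t)
  have hAslice : ∀ t : ℝ, Integrable (fun y => A (y, t)) := fun t =>
    (hAcont.comp (continuous_id.prodMk continuous_const)).integrable_of_hasCompactSupport
      (slice1 hAcs t)
  -- the key computation
  have key : ∀ cL cR dL dR : ℝ,
      (∫ t in Ioi (0:ℝ), ∫ x : ℝ,
        ((if x < s * t + x₀ then cL else cR) * pdt φ x t +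
         (if x < s * t + x₀ then dL else dR) * pdx φ x t))
      = ((dL - dR) - s * (cL - cR)) * ∫ t in Ioi (0:ℝ), g t := by
    intro cL cR dL dR
    have hbddmul : ∀ (a b : ℝ) (F : ℝ → ℝ), Integrable F →
        Integrable (fun y : ℝ => (if y < 0 then a else b) * F y) := by
      intro a b F hF
      apply hF.bdd_mul (c := max |a| |b|)
      · exact ((measurable_const.ite measurableSet_Iio measurable_const).aestronglyMeasurable)
      · refine Filter.Eventually.of_forall fun y => ?_
        by_cases hy : y < 0
        · simp only [if_pos hy, Real.norm_eq_abs]; exact le_max_left _ _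
        · simp only [if_neg hy, Real.norm_eq_abs]; exact le_max_right _ _
    have inner : ∀ t : ℝ,
        (∫ x : ℝ, ((if x < s * t + x₀ then cL else cR) * pdt φ x t +
          (if x < s * t + x₀ then dL else dR) * pdx φ x t))
        = cL * (∫ y in Iic (0:ℝ), B (y, t)) + cR * (∫ y in Ioi (0:ℝ), B (y, t))
          + ((dL - dR) - s * (cL - cR)) * g t := by
      intro t
      have step1 : (∫ x : ℝ, ((if x < s * t + x₀ then cL else cR) * pdt φ x t +
            (if x < s * t + x₀ then dL else dR) * pdx φ x t))
          = ∫ y : ℝ, ((if y < 0 then cL else cR) * B (y, t)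
              + (if y < 0 then dL - s * cL else dR - s * cR) * A (y, t)) := by
        rw [← integral_add_right_eq_self
          (fun x : ℝ => ((if x < s * t + x₀ then cL else cR) * pdt φ x t +
            (if x < s * t + x₀ then dL else dR) * pdx φ x t)) (s * t + x₀)]
        congr 1
        funext y
        show ((if y + (s * t + x₀) < s * t + x₀ then cL else cR) * pdt φ (y + (s * t + x₀)) t +
            (if y + (s * t + x₀) < s * t + x₀ then dL else dR) * pdx φ (y + (s * t + x₀)) t) = _
        have h1 : pdx φ (y + (s * t + x₀)) t = A (y, t) := (hAeq y t).symm
        have h2 : pdt φ (y + (s * t + x₀)) t = B (y, t) - s * A (y, t) := by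
          rw [hBeq y t, ← h1]; ring
        have hyiff : (y + (s * t + x₀) < s * t + x₀) ↔ y < 0 := by
          constructor <;> intro hh <;> linarith
        rw [h1, h2]
        simp only [hyiff]
        split_ifs <;> ring
      have hf1 : Integrable (fun y : ℝ => (if y < 0 then cL else cR) * B (y, t)
          + (if y < 0 then dL - s * cL else dR - s * cR) * A (y, t)) :=
        (hbddmul _ _ _ (hBslice t)).add (hbddmul _ _ _ (hAslice t))
      rw [step1, ← intervalIntegral.integral_Iic_add_Ioi (b := (0:ℝ))
        hf1.integrableOn hf1.integrableOn]
      have hIic : (∫ y in Iic (0:ℝ), ((if y < 0 then cL else cR) * B (y, t)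
            + (if y < 0 then dL - s * cL else dR - s * cR) * A (y, t)))
          = cL * (∫ y in Iic (0:ℝ), B (y, t)) + (dL - s * cL) * g t := by
        have h0 : ∀ᵐ y : ℝ, y ≠ 0 := by
          refine ae_iff.mpr ?_
          have : {y : ℝ | ¬ y ≠ 0} = {0} := by ext y; simp
          rw [this]
          exact Real.volume_singleton
        have hae : ∀ᵐ y : ℝ, y ∈ Iic (0:ℝ) →
            ((if y < 0 then cL else cR) * B (y, t)
              + (if y < 0 then dL - s * cL else dR - s * cR) * A (y, t))
            = cL * B (y, t) + (dL - s * cL) * A (y, t) := by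
          filter_upwards [h0] with y hy hmem
          have hlt : y < 0 := lt_of_le_of_ne hmem hy
          rw [if_pos hlt, if_pos hlt]
        rw [setIntegral_congr_ae measurableSet_Iic hae,
          integral_add ((hBslice t).const_mul cL).integrableOn
            ((hAslice t).const_mul (dL - s * cL)).integrableOn,
          integral_const_mul, integral_const_mul, hIicA t]
      have hIoi : (∫ y in Ioi (0:ℝ), ((if y < 0 then cL else cR) * B (y, t)
            + (if y < 0 then dL - s * cL else dR - s * cR) * A (y, t)))
          = cR * (∫ y in Ioi (0:ℝ), B (y, t)) + (dR - s * cR) * (- g t) := by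
        have heq : Set.EqOn (fun y : ℝ => ((if y < 0 then cL else cR) * B (y, t)
              + (if y < 0 then dL - s * cL else dR - s * cR) * A (y, t)))
            (fun y : ℝ => cR * B (y, t) + (dR - s * cR) * A (y, t)) (Ioi 0) := by
          intro y hy
          have hnl : ¬ y < 0 := not_lt.mpr (le_of_lt hy)
          simp only [if_neg hnl]
        rw [setIntegral_congr_fun measurableSet_Ioi heq,
          integral_add ((hBslice t).const_mul cR).integrableOn
            ((hAslice t).const_mul (dR - s * cR)).integrableOn,
          integral_const_mul, integral_const_mul, hIoiA t]
      rw [hIic, hIoi]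
      ring
    rw [setIntegral_congr_fun measurableSet_Ioi (fun t _ => inner t)]
    have hI1 : Integrable (fun t : ℝ => cL * ∫ y in Iic (0:ℝ), B (y, t)) :=
      (hmarg _ measurableSet_Iic).const_mul cL
    have hI2 : Integrable (fun t : ℝ => cR * ∫ y in Ioi (0:ℝ), B (y, t)) :=
      (hmarg _ measurableSet_Ioi).const_mul cR
    have hI12 : Integrable (fun t : ℝ => cL * (∫ y in Iic (0:ℝ), B (y, t))
        + cR * ∫ y in Ioi (0:ℝ), B (y, t)) := hI1.add hI2
    have hI3 : Integrable (fun t : ℝ => (dL - dR - s * (cL - cR)) * g t) := hgint.const_mul _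
    rw [integral_add hI12.restrict hI3.restrict, integral_add hI1.restrict hI2.restrict,
      integral_const_mul, integral_const_mul, integral_const_mul,
      key0 _ measurableSet_Iic, key0 _ measurableSet_Ioi]
    ring
  constructor
  · have h1 : (fun t : ℝ => ∫ x : ℝ, (u x t * pdt φ x t + (u x t) ^ 2 / 2 * pdx φ x t))
        = fun t : ℝ => ∫ x : ℝ, ((if x < s * t + x₀ then uL else uR) * pdt φ x t +
            (if x < s * t + x₀ then uL ^ 2 / 2 else uR ^ 2 / 2) * pdx φ x t) := by
      funext t
      congr 1
      funext x
      show ((if x < s * t + x₀ then uL else uR) * pdt φ x t +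
          (if x < s * t + x₀ then uL else uR) ^ 2 / 2 * pdx φ x t) = _
      by_cases hx : x < s * t + x₀ <;> simp [hx]
    rw [show (∫ t in Ioi (0:ℝ), ∫ x : ℝ,
          (u x t * pdt φ x t + (u x t) ^ 2 / 2 * pdx φ x t))
        = ∫ t in Ioi (0:ℝ), ∫ x : ℝ,
          ((if x < s * t + x₀ then uL else uR) * pdt φ x t +
            (if x < s * t + x₀ then uL ^ 2 / 2 else uR ^ 2 / 2) * pdx φ x t) from
        congrArg _ h1]
    rw [key uL uR (uL ^ 2 / 2) (uR ^ 2 / 2)]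
    have hc0 : ((uL ^ 2 / 2 - uR ^ 2 / 2) - s * (uL - uR)) = 0 := by rw [hs]; ring
    rw [hc0, zero_mul]
  · have h2 : (fun t : ℝ => ∫ x : ℝ, ρ x t * (pdt φ x t + u x t * pdx φ x t))
        = fun t : ℝ => ∫ x : ℝ, ((if x < s * t + x₀ then ρL else ρR) * pdt φ x t +
            (if x < s * t + x₀ then ρL * uL else ρR * uR) * pdx φ x t) := by
      funext t
      congr 1
      funext x
      show ((if x < s * t + x₀ then ρL else ρR) *
          (pdt φ x t + (if x < s * t + x₀ then uL else uR) * pdx φ x t)) = _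
      by_cases hx : x < s * t + x₀ <;> simp [hx] <;> ring
    rw [show (∫ t in Ioi (0:ℝ), ∫ x : ℝ, ρ x t * (pdt φ x t + u x t * pdx φ x t))
        = ∫ t in Ioi (0:ℝ), ∫ x : ℝ,
          ((if x < s * t + x₀ then ρL else ρR) * pdt φ x t +
            (if x < s * t + x₀ then ρL * uL else ρR * uR) * pdx φ x t) from
        congrArg _ h2]
    rw [key ρL ρR (ρL * uL) (ρR * uR)]
    have hδ : (∫ t in Ioi (0:ℝ), e t * (pdt φ (s * t + x₀) t + s * pdx φ (s * t + x₀) t))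
        = - ((1 / 2 * (uL - uR) * (ρL + ρR)) * ∫ t in Ioi (0:ℝ), g t) := by
      have hptw : ∀ t : ℝ, e t * (pdt φ (s * t + x₀) t + s * pdx φ (s * t + x₀) t)
          = (1 / 2 * (uL - uR) * (ρL + ρR)) * (t * deriv g t) := by
        intro t
        have h0 := hBeq 0 t
        rw [zero_add] at h0
        have hd : deriv g t = B (0, t) := (hgderiv t).deriv
        have he : e t = 1 / 2 * (uL - uR) * (ρL + ρR) * t := rfl
        rw [he, hd, h0]
        ring
      calc (∫ t in Ioi (0:ℝ), e t * (pdt φ (s * t + x₀) t + s * pdx φ (s * t + x₀) t))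
          = ∫ t in Ioi (0:ℝ), (1 / 2 * (uL - uR) * (ρL + ρR)) * (t * deriv g t) :=
            setIntegral_congr_fun measurableSet_Ioi (fun t _ => hptw t)
        _ = (1 / 2 * (uL - uR) * (ρL + ρR)) * ∫ t in Ioi (0:ℝ), (t * deriv g t) :=
            integral_const_mul _ _
        _ = (1 / 2 * (uL - uR) * (ρL + ρR)) * ∫ t : ℝ, (t * deriv g t) := by
            congr 1
            apply setIntegral_eq_integral_of_forall_compl_eq_zero
            intro t ht
            have ht' : t ≤ 0 := by simpa using ht
            have hdz : deriv g t = 0 := by rw [(hgderiv t).deriv]; exact hB0 (0, t) ht'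
            simp [hdz]
        _ = (1 / 2 * (uL - uR) * (ρL + ρR)) * (- ∫ t : ℝ, g t) := by
            rw [integral_mul_deriv hgsm hgcs]
        _ = - ((1 / 2 * (uL - uR) * (ρL + ρR)) * ∫ t in Ioi (0:ℝ), g t) := by
            rw [← setIntegral_eq_integral_of_forall_compl_eq_zero
              (s := Ioi (0:ℝ)) (fun t ht => hg0 t (by simpa using ht))]
            ring
    rw [hδ]
    have hc1 : ((ρL * uL - ρR * uR) - s * (ρL - ρR)) = 1 / 2 * (uL - uR) * (ρL + ρR) := by
      rw [hs]; ring
    rw [hc1]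
    ring
end

section
/- Let u_L, u_R, ρ_L, ρ_R ∈ ℝ with u_L < u_R, and let x₀ ≥ 0. Define on ℝ × (0,∞): u(x,t) = u_L for x ≤ u_L t + x₀, u(x,t) = (x − x₀)/t for u_L t + x₀ ≤ x ≤ u_R t + x₀, u(x,t) = u_R for x ≥ u_R t + x₀; and ρ(x,t) = ρ_L for x < u_L t + x₀, ρ(x,t) = 0 for u_L t + x₀ < x < u_R t + x₀, ρ(x,t) = ρ_R for x > u_R t + x₀. Then u is continuous on ℝ × (0,∞), and for every φ ∈ C_c^∞(ℝ × (0,∞)): (i) ∫₀^∞ ∫_ℝ (u φ_t + (u²/2) φ_x) dx dt = 0 and (ii) ∫₀^∞ ∫_ℝ ρ (φ_t + u φ_x) dx dt = 0. That is, the rarefaction-wave pair (u, ρ), with density vanishing inside the rarefaction fan, is a weak solution of the system u_t + (u²/2)_x = 0, ρ_t + (ρu)_x = 0 on t > 0. -/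
open MeasureTheory Set
open Filter

namespace RareAux


lemma intervalIntegrable_of_bdd {g : ℝ → ℝ} {C a b : ℝ}
    (hm : Measurable g) (hb : ∀ x ∈ Icc a b, |g x| ≤ C) (hab : a ≤ b) :
    IntervalIntegrable g volume a b := by
  rw [intervalIntegrable_iff_integrableOn_Ioc_of_le hab]
  refine Integrable.mono' (g := fun _ => C) (integrableOn_const measure_Ioc_lt_top.ne)
    hm.aestronglyMeasurable.restrict ?_
  filter_upwards [ae_restrict_mem measurableSet_Ioc] with x hx
  simpa [Real.norm_eq_abs] using hb x (Ioc_subset_Icc_self hx)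

/-- Integration by parts on the real line for a continuous `f` differentiable off a
countable set, against a smooth `ψ` supported in `Ioo a b`. -/
lemma ibp_line {f g ψ : ℝ → ℝ} {s : Set ℝ} (hs : s.Countable) {a b : ℝ} (hab : a ≤ b)
    (hf : ContinuousOn f (Icc a b))
    (hd : ∀ x ∈ Ioo a b \ s, HasDerivAt f (g x) x)
    (hgi : IntervalIntegrable g volume a b)
    (hψ : ContDiff ℝ (⊤ : ℕ∞) ψ)
    (hsupp : tsupport ψ ⊆ Ioo a b) :
    ∫ x, (f x * deriv ψ x + g x * ψ x) = 0 := by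
  have hψc : Continuous ψ := hψ.continuous
  have hψ' : Continuous (deriv ψ) := hψ.continuous_deriv (by simp)
  have hz : ∀ x, x ∉ Ioo a b → ψ x = 0 := fun x hx =>
    image_eq_zero_of_notMem_tsupport (fun hxx => hx (hsupp hxx))
  have hz' : ∀ x, x ∉ Ioo a b → deriv ψ x = 0 := by
    intro x hx
    by_contra hne
    exact hx (hsupp (support_deriv_subset (by simpa using hne)))
  have hsub : Function.support (fun x => f x * deriv ψ x + g x * ψ x) ⊆ Ioc a b := by
    intro x hx
    by_contra hxn
    have hxn' : x ∉ Ioo a b := fun hxo => hxn (Ioo_subset_Ioc_self hxo)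
    simp [Function.mem_support, hz x hxn', hz' x hxn'] at hx
  rw [← intervalIntegral.integral_eq_integral_of_support_subset hsub]
  have Hc : ContinuousOn (fun x => f x * ψ x) (Icc a b) := hf.mul hψc.continuousOn
  have Hd : ∀ x ∈ Ioo a b \ s, HasDerivAt (fun x => f x * ψ x)
      (f x * deriv ψ x + g x * ψ x) x := by
    intro x hx
    have h1 := (hd x hx).fun_mul ((hψ.differentiable (by simp)).differentiableAt.hasDerivAt)
    simpa [add_comm] using h1
  have Hi : IntervalIntegrable (fun x => f x * deriv ψ x + g x * ψ x) volume a b := by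
    refine ((hf.mul hψ'.continuousOn).intervalIntegrable_of_Icc hab).add
      (hgi.mul_continuousOn ?_)
    exact hψc.continuousOn
  have := integral_eq_of_hasDerivAt_off_countable_of_le (fun x => f x * ψ x)
    (fun x => f x * deriv ψ x + g x * ψ x) hab hs Hc Hd Hi
  rw [this]
  rw [hz a (by simp), hz b (by simp)]
  ring



variable {φ : ℝ → ℝ → ℝ}

lemma hasDerivAt_sect_x (hΦ : ContDiff ℝ (⊤ : ℕ∞) (fun z : ℝ × ℝ => φ z.1 z.2)) (x t : ℝ) :
    HasDerivAt (fun x' => φ x' t) (fderiv ℝ (fun z : ℝ × ℝ => φ z.1 z.2) (x, t) (1, 0)) x := by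
  have hdiff := (hΦ.differentiable (by simp) (x, t)).hasFDerivAt
  have hγ : HasDerivAt (fun x' : ℝ => ((x' : ℝ), t)) ((1 : ℝ), (0 : ℝ)) x :=
    (hasDerivAt_id x).prodMk (hasDerivAt_const x t)
  exact hdiff.comp_hasDerivAt x hγ

lemma hasDerivAt_sect_t (hΦ : ContDiff ℝ (⊤ : ℕ∞) (fun z : ℝ × ℝ => φ z.1 z.2)) (x t : ℝ) :
    HasDerivAt (fun t' => φ x t') (fderiv ℝ (fun z : ℝ × ℝ => φ z.1 z.2) (x, t) (0, 1)) t := by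
  have hdiff := (hΦ.differentiable (by simp) (x, t)).hasFDerivAt
  have hγ : HasDerivAt (fun t' : ℝ => ((x : ℝ), t')) ((0 : ℝ), (1 : ℝ)) t :=
    (hasDerivAt_const t x).prodMk (hasDerivAt_id t)
  exact hdiff.comp_hasDerivAt t hγ

lemma pdx_eq (hΦ : ContDiff ℝ (⊤ : ℕ∞) (fun z : ℝ × ℝ => φ z.1 z.2)) (x t : ℝ) :
    pdx φ x t = fderiv ℝ (fun z : ℝ × ℝ => φ z.1 z.2) (x, t) (1, 0) :=
  (hasDerivAt_sect_x hΦ x t).deriv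

lemma pdt_eq (hΦ : ContDiff ℝ (⊤ : ℕ∞) (fun z : ℝ × ℝ => φ z.1 z.2)) (x t : ℝ) :
    pdt φ x t = fderiv ℝ (fun z : ℝ × ℝ => φ z.1 z.2) (x, t) (0, 1) :=
  (hasDerivAt_sect_t hΦ x t).deriv

lemma hasDerivAt_pdt (hΦ : ContDiff ℝ (⊤ : ℕ∞) (fun z : ℝ × ℝ => φ z.1 z.2)) (x t : ℝ) : HasDerivAt (fun t' => φ x t') (pdt φ x t) t := by
  rw [pdt_eq hΦ]; exact hasDerivAt_sect_t hΦ x t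

lemma hasDerivAt_pdx (hΦ : ContDiff ℝ (⊤ : ℕ∞) (fun z : ℝ × ℝ => φ z.1 z.2)) (x t : ℝ) : HasDerivAt (fun x' => φ x' t) (pdx φ x t) x := by
  rw [pdx_eq hΦ]; exact hasDerivAt_sect_x hΦ x t

/-- chain rule along the line `t' ↦ (y + c t', t')`. -/
lemma hasDerivAt_line (hΦ : ContDiff ℝ (⊤ : ℕ∞) (fun z : ℝ × ℝ => φ z.1 z.2)) (c y t : ℝ) :
    HasDerivAt (fun t' => φ (y + c * t') t')
      (pdt φ (y + c * t) t + c * pdx φ (y + c * t) t) t := by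
  have hdiff := (hΦ.differentiable (by simp) (y + c * t, t)).hasFDerivAt
  have hγ : HasDerivAt (fun t' : ℝ => ((y + c * t' : ℝ), t')) ((c : ℝ), (1 : ℝ)) t := by
    have h1 : HasDerivAt (fun t' : ℝ => y + c * t') c t := by
      simpa using ((hasDerivAt_id t).const_mul c).const_add y
    exact h1.prodMk (hasDerivAt_id t)
  have := HasFDerivAt.comp_hasDerivAt
      (f := fun t' : ℝ => ((y + c * t' : ℝ), t')) t hdiff hγ
  have hsplit : fderiv ℝ (fun z : ℝ × ℝ => φ z.1 z.2) (y + c * t, t) (c, 1)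
      = pdt φ (y + c * t) t + c * pdx φ (y + c * t) t := by
    have hv : ((c : ℝ), (1 : ℝ)) = ((0 : ℝ), (1 : ℝ)) + c • ((1 : ℝ), (0 : ℝ)) := by
      simp [Prod.ext_iff]
    rw [hv, map_add, ContinuousLinearMap.map_smul, pdt_eq hΦ, pdx_eq hΦ]
    simp [smul_eq_mul]
  rw [hsplit] at this
  exact this

lemma pdt_zero (hΦ : ContDiff ℝ (⊤ : ℕ∞) (fun z : ℝ × ℝ => φ z.1 z.2)) {x t : ℝ} (hz : (x, t) ∉ tsupport (fun z : ℝ × ℝ => φ z.1 z.2)) :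
    pdt φ x t = 0 := by
  rw [pdt_eq hΦ]
  have : fderiv ℝ (fun z : ℝ × ℝ => φ z.1 z.2) (x, t) = 0 := by
    by_contra hne
    exact hz (support_fderiv_subset ℝ (by simpa using hne))
  simp [this]

lemma pdx_zero (hΦ : ContDiff ℝ (⊤ : ℕ∞) (fun z : ℝ × ℝ => φ z.1 z.2)) {x t : ℝ} (hz : (x, t) ∉ tsupport (fun z : ℝ × ℝ => φ z.1 z.2)) :
    pdx φ x t = 0 := by
  rw [pdx_eq hΦ]
  have : fderiv ℝ (fun z : ℝ × ℝ => φ z.1 z.2) (x, t) = 0 := by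
    by_contra hne
    exact hz (support_fderiv_subset ℝ (by simpa using hne))
  simp [this]

lemma phi_zero {x t : ℝ} (hz : (x, t) ∉ tsupport (fun z : ℝ × ℝ => φ z.1 z.2)) :
    φ x t = 0 :=
  image_eq_zero_of_notMem_tsupport (f := fun z : ℝ × ℝ => φ z.1 z.2) hz

lemma continuous_pdt2 (hΦ : ContDiff ℝ (⊤ : ℕ∞) (fun z : ℝ × ℝ => φ z.1 z.2)) : Continuous (fun z : ℝ × ℝ => pdt φ z.1 z.2) := by
  have : (fun z : ℝ × ℝ => pdt φ z.1 z.2)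
      = fun z : ℝ × ℝ => fderiv ℝ (fun z : ℝ × ℝ => φ z.1 z.2) z ((0 : ℝ), (1 : ℝ)) := by
    funext z; exact pdt_eq hΦ z.1 z.2
  rw [this]
  exact (hΦ.continuous_fderiv (by simp)).clm_apply continuous_const

lemma continuous_pdx2 (hΦ : ContDiff ℝ (⊤ : ℕ∞) (fun z : ℝ × ℝ => φ z.1 z.2)) : Continuous (fun z : ℝ × ℝ => pdx φ z.1 z.2) := by
  have : (fun z : ℝ × ℝ => pdx φ z.1 z.2)
      = fun z : ℝ × ℝ => fderiv ℝ (fun z : ℝ × ℝ => φ z.1 z.2) z ((1 : ℝ), (0 : ℝ)) := by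
    funext z; exact pdx_eq hΦ z.1 z.2
  rw [this]
  exact (hΦ.continuous_fderiv (by simp)).clm_apply continuous_const



/-- The rarefaction wave profile. -/
noncomputable def uFun (uL uR x₀ : ℝ) : ℝ → ℝ → ℝ := fun x t =>
  if x ≤ uL * t + x₀ then uL else if uR * t + x₀ ≤ x then uR else (x - x₀) / t

/-- The candidate `x`-derivative of `(uFun)²/2` (also `-`(t-derivative of `uFun`)). -/
noncomputable def gFun (uL uR x₀ : ℝ) : ℝ → ℝ → ℝ := fun x t =>
  if uL * t + x₀ ≤ x ∧ x < uR * t + x₀ then (x - x₀) / t ^ 2 else 0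

variable {uL uR x₀ : ℝ}

lemma uFun_eq_clamp (h : uL < uR) {t : ℝ} (ht : 0 < t) (x : ℝ) :
    uFun uL uR x₀ x t = max uL (min ((x - x₀) / t) uR) := by
  unfold uFun
  rcases le_or_gt x (uL * t + x₀) with h1 | h1
  · have hv : (x - x₀) / t ≤ uL := by
      rw [div_le_iff₀ ht]; nlinarith [mul_comm uL t]
    rw [if_pos h1, min_eq_left (hv.trans h.le), max_eq_left hv]
  · have hv : uL < (x - x₀) / t := by
      rw [lt_div_iff₀ ht]; nlinarith
    rw [if_neg (not_le.2 h1)]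
    rcases le_or_gt (uR * t + x₀) x with h2 | h2
    · have hv2 : uR ≤ (x - x₀) / t := by
        rw [le_div_iff₀ ht]; nlinarith
      rw [if_pos h2, min_eq_right hv2, max_eq_right h.le]
    · have hv2 : (x - x₀) / t < uR := by
        rw [div_lt_iff₀ ht]; nlinarith
      rw [if_neg (not_le.2 h2), min_eq_left hv2.le, max_eq_right hv.le]

lemma uFun_mem (h : uL < uR) {t : ℝ} (ht : 0 < t) (x : ℝ) :
    uL ≤ uFun uL uR x₀ x t ∧ uFun uL uR x₀ x t ≤ uR := by
  rw [uFun_eq_clamp h ht]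
  constructor
  · exact le_max_left _ _
  · exact max_le h.le (min_le_right _ _)

lemma uFun_abs_le (h : uL < uR) {t : ℝ} (ht : 0 < t) (x : ℝ) :
    |uFun uL uR x₀ x t| ≤ max |uL| |uR| := by
  obtain ⟨h1, h2⟩ := uFun_mem (x₀ := x₀) h ht x
  rw [abs_le]
  constructor
  · calc -(max |uL| |uR|) ≤ -|uL| := by simp [le_max_left]
    _ ≤ uL := neg_abs_le uL
    _ ≤ _ := h1
  · exact h2.trans ((le_abs_self uR).trans (le_max_right _ _))

lemma continuousOn_uFun (h : uL < uR) :
    ContinuousOn (fun z : ℝ × ℝ => uFun uL uR x₀ z.1 z.2) (univ ×ˢ Ioi 0) := by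
  have : ContinuousOn (fun z : ℝ × ℝ => max uL (min ((z.1 - x₀) / z.2) uR))
      (univ ×ˢ Ioi (0:ℝ)) := by
    have hdiv : ContinuousOn (fun z : ℝ × ℝ => (z.1 - x₀) / z.2) (univ ×ˢ Ioi (0:ℝ)) := by
      apply ContinuousOn.div
      · exact (continuous_fst.sub continuous_const).continuousOn
      · exact continuous_snd.continuousOn
      · rintro ⟨x, t⟩ ⟨-, ht⟩; exact ne_of_gt ht
    exact continuousOn_const.sup (hdiv.inf continuousOn_const)
  refine this.congr ?_
  rintro ⟨x, t⟩ ⟨-, ht⟩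
  exact uFun_eq_clamp h ht x

lemma measurable_uFun2 : Measurable (fun p : ℝ × ℝ => uFun uL uR x₀ p.2 p.1) := by
  unfold uFun
  refine Measurable.ite ?_ measurable_const (Measurable.ite ?_ measurable_const ?_)
  · exact measurableSet_le measurable_snd
      (((measurable_fst.const_mul uL).add_const x₀))
  · exact measurableSet_le ((measurable_fst.const_mul uR).add_const x₀) measurable_snd
  · exact (measurable_snd.sub measurable_const).div measurable_fst

lemma measurable_gFun2 : Measurable (fun p : ℝ × ℝ => gFun uL uR x₀ p.2 p.1) := by
  unfold gFun
  refine Measurable.ite ?_ ?_ measurable_const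
  · refine MeasurableSet.inter ?_ ?_
    · exact measurableSet_le ((measurable_fst.const_mul uL).add_const x₀) measurable_snd
    · exact measurableSet_lt measurable_snd ((measurable_fst.const_mul uR).add_const x₀)
  · exact (measurable_snd.sub measurable_const).div (measurable_fst.pow measurable_const)

/-- derivative of `x ↦ (uFun x t)²/2` at non-kink points. -/
lemma hasDerivAt_x (h : uL < uR) {t : ℝ} (ht : 0 < t) {x : ℝ}
    (hx1 : x ≠ uL * t + x₀) (hx2 : x ≠ uR * t + x₀) :
    HasDerivAt (fun x' => (uFun uL uR x₀ x' t) ^ 2 / 2) (gFun uL uR x₀ x t) x := by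
  have hlt : uL * t + x₀ < uR * t + x₀ := by nlinarith
  rcases lt_trichotomy x (uL * t + x₀) with hc | hc | hc
  · -- left constant region
    have hev : (fun x' => (uFun uL uR x₀ x' t) ^ 2 / 2) =ᶠ[nhds x] fun _ => uL ^ 2 / 2 := by
      filter_upwards [IsOpen.mem_nhds (isOpen_Iio) hc] with x' hx'
      have : x' ≤ uL * t + x₀ := le_of_lt hx'
      simp [uFun, this]
    have hg : gFun uL uR x₀ x t = 0 := by
      have : ¬ (uL * t + x₀ ≤ x) := not_le.2 hc
      simp [gFun, this]
    rw [hg]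
    exact (hasDerivAt_const x (uL ^ 2 / 2)).congr_of_eventuallyEq hev
  · exact absurd hc hx1
  · rcases lt_trichotomy x (uR * t + x₀) with hc2 | hc2 | hc2
    · -- fan region
      have hev : (fun x' => (uFun uL uR x₀ x' t) ^ 2 / 2)
          =ᶠ[nhds x] fun x' => (x' - x₀) ^ 2 / (2 * t ^ 2) := by
        filter_upwards [IsOpen.mem_nhds (isOpen_Ioo (a := uL * t + x₀) (b := uR * t + x₀))
          ⟨hc, hc2⟩] with x' hx'
        have h1 : ¬ (x' ≤ uL * t + x₀) := not_le.2 hx'.1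
        have h2 : ¬ (uR * t + x₀ ≤ x') := not_le.2 hx'.2
        have ht' : t ≠ 0 := ne_of_gt ht
        simp only [uFun, h1, h2, if_false]
        rw [div_pow]
        ring
      have hg : gFun uL uR x₀ x t = (x - x₀) / t ^ 2 := by
        simp [gFun, hc.le, hc2]
      rw [hg]
      have hD : HasDerivAt (fun x' => (x' - x₀) ^ 2 / (2 * t ^ 2)) ((x - x₀) / t ^ 2) x := by
        have h1 : HasDerivAt (fun x' : ℝ => (x' - x₀) ^ 2) (2 * (x - x₀)) x := by
          simpa using ((hasDerivAt_id x).sub_const x₀).fun_pow 2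
        have := h1.div_const (2 * t ^ 2)
        refine this.congr_deriv ?_
        have ht' : (t : ℝ) ≠ 0 := ne_of_gt ht
        ring
      exact hD.congr_of_eventuallyEq hev
    · exact absurd hc2 hx2
    · -- right constant region
      have hev : (fun x' => (uFun uL uR x₀ x' t) ^ 2 / 2) =ᶠ[nhds x] fun _ => uR ^ 2 / 2 := by
        filter_upwards [IsOpen.mem_nhds (isOpen_Ioi) hc2] with x' hx'
        have h2 : uR * t + x₀ ≤ x' := le_of_lt hx'
        have h1 : ¬ (x' ≤ uL * t + x₀) := not_le.2 (lt_trans hlt hx')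
        simp [uFun, h1, h2]
      have hg : gFun uL uR x₀ x t = 0 := by
        have : ¬ (x < uR * t + x₀) := not_lt.2 hc2.le
        simp [gFun, this]
      rw [hg]
      exact (hasDerivAt_const x (uR ^ 2 / 2)).congr_of_eventuallyEq hev



lemma hasDerivAt_t (h : uL < uR) {x t : ℝ} (ht : 0 < t)
    (h1 : uL ≠ 0 → uL * t + x₀ ≠ x) (h2 : uR ≠ 0 → uR * t + x₀ ≠ x) :
    HasDerivAt (fun t' => uFun uL uR x₀ x t') (-(gFun uL uR x₀ x t)) t := by
  rcases lt_trichotomy x (uL * t + x₀) with hc | hc | hc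
  · -- left region
    have hO : IsOpen {t' : ℝ | x < uL * t' + x₀} :=
      isOpen_lt continuous_const (by continuity)
    have hev : (fun t' => uFun uL uR x₀ x t') =ᶠ[nhds t] fun _ => uL := by
      filter_upwards [hO.mem_nhds hc] with t' ht'
      simp [uFun, le_of_lt ht']
    have hg : gFun uL uR x₀ x t = 0 := by
      simp [gFun, not_le.2 hc]
    rw [hg, neg_zero]
    exact (hasDerivAt_const t uL).congr_of_eventuallyEq hev
  · -- boundary left: uL = 0, x = x₀
    have huL : uL = 0 := by
      by_contra hne
      exact h1 hne hc.symm
    have hx : x = x₀ := by rw [huL] at hc; linarith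
    have hev : (fun t' => uFun uL uR x₀ x t') = fun _ => uL := by
      funext t'
      have : x ≤ uL * t' + x₀ := by rw [huL, hx]; simp
      simp [uFun, this]
    have hg : gFun uL uR x₀ x t = 0 := by
      unfold gFun
      rw [hx, sub_self, zero_div]
      simp
    rw [hg, neg_zero, hev]
    exact hasDerivAt_const t uL
  · rcases lt_trichotomy x (uR * t + x₀) with hc2 | hc2 | hc2
    · -- fan region
      have hO : IsOpen {t' : ℝ | uL * t' + x₀ < x ∧ x < uR * t' + x₀} :=
        IsOpen.and (isOpen_lt (by continuity) continuous_const)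
          (isOpen_lt continuous_const (by continuity))
      have hev : (fun t' => uFun uL uR x₀ x t') =ᶠ[nhds t] fun t' => (x - x₀) / t' := by
        filter_upwards [hO.mem_nhds ⟨hc, hc2⟩] with t' ht'
        simp [uFun, not_le.2 ht'.1, not_le.2 ht'.2]
      have hg : gFun uL uR x₀ x t = (x - x₀) / t ^ 2 := by
        simp [gFun, hc.le, hc2]
      rw [hg]
      have hD : HasDerivAt (fun t' : ℝ => (x - x₀) / t') (-((x - x₀) / t ^ 2)) t := by
        have := (hasDerivAt_inv (ne_of_gt ht)).const_mul (x - x₀)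
        have heq : (fun t' : ℝ => (x - x₀) * t'⁻¹) = fun t' : ℝ => (x - x₀) / t' := by
          funext t'; rw [div_eq_mul_inv]
        rw [heq] at this
        refine this.congr_deriv ?_
        ring
      exact hD.congr_of_eventuallyEq hev
    · -- boundary right: uR = 0, x = x₀
      have huR : uR = 0 := by
        by_contra hne
        exact h2 hne hc2.symm
      have hx : x = x₀ := by rw [huR] at hc2; linarith
      have hev : (fun t' => uFun uL uR x₀ x t') =ᶠ[nhds t] fun _ => uR := by
        filter_upwards [(isOpen_Ioi (a := (0:ℝ))).mem_nhds ht] with t' ht'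
        have hA : ¬ (x ≤ uL * t' + x₀) := by
          rw [hx]; push_neg
          have hprod : uL * t' < 0 :=
            mul_neg_of_neg_of_pos (by linarith [h.trans_eq huR]) (mem_Ioi.1 ht')
          linarith
        have hB : uR * t' + x₀ ≤ x := by rw [huR, hx]; simp
        simp [uFun, hA, hB]
      have hg : gFun uL uR x₀ x t = 0 := by
        have : ¬ (x < uR * t + x₀) := by rw [huR, hx]; simp
        simp [gFun, this]
      rw [hg, neg_zero]
      exact (hasDerivAt_const t uR).congr_of_eventuallyEq hev
    · -- right region
      have hO : IsOpen {t' : ℝ | uL * t' + x₀ < x ∧ uR * t' + x₀ < x} :=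
        IsOpen.and (isOpen_lt (by continuity) continuous_const)
          (isOpen_lt (by continuity) continuous_const)
      have hmem : uL * t + x₀ < x ∧ uR * t + x₀ < x := ⟨hc, hc2⟩
      have hev : (fun t' => uFun uL uR x₀ x t') =ᶠ[nhds t] fun _ => uR := by
        filter_upwards [hO.mem_nhds hmem] with t' ht'
        simp [uFun, not_le.2 ht'.1, le_of_lt ht'.2]
      have hg : gFun uL uR x₀ x t = 0 := by
        simp [gFun, not_lt.2 hc2.le]
      rw [hg, neg_zero]
      exact (hasDerivAt_const t uR).congr_of_eventuallyEq hev


lemma gFun_abs_le {t : ℝ} (ht : 0 < t) (x : ℝ) :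
    |gFun uL uR x₀ x t| ≤ max |uL| |uR| / t := by
  unfold gFun
  split_ifs with hcond
  · obtain ⟨hA, hB⟩ := hcond
    have habs : |x - x₀| ≤ max |uL| |uR| * t := by
      rw [abs_le]
      constructor
      · nlinarith [le_max_left |uL| |uR|, neg_abs_le uL]
      · nlinarith [le_max_right |uL| |uR|, le_abs_self uR]
    rw [abs_div, abs_pow, abs_of_pos ht]
    rw [div_le_div_iff₀ (by positivity) ht]
    nlinarith
  · simp only [abs_zero]
    positivity

lemma integrable_of_bdd_supp1 {f : ℝ → ℝ} {C R : ℝ}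
    (hm : AEStronglyMeasurable f volume)
    (h0 : ∀ x, x ∉ Icc (-R) R → f x = 0) (hb : ∀ x, |f x| ≤ C) :
    Integrable f volume := by
  refine Integrable.mono' (g := (Icc (-R) R).indicator fun _ => C) ?_ hm ?_
  · exact (integrable_indicator_iff measurableSet_Icc).2
      (integrableOn_const measure_Icc_lt_top.ne)
  · refine ae_of_all _ fun x => ?_
    by_cases hx : x ∈ Icc (-R) R
    · simp [indicator_of_mem hx, Real.norm_eq_abs, hb x]
    · simp [indicator_of_notMem hx, Real.norm_eq_abs, h0 x hx]

lemma integrable_of_bdd_supp2 {f : ℝ × ℝ → ℝ} {C a b c d : ℝ}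
    (hm : AEStronglyMeasurable f ((volume.restrict (Ioi (0:ℝ))).prod volume))
    (h0 : ∀ p, p ∉ Icc a b ×ˢ Icc c d → f p = 0)
    (hb : ∀ p ∈ Icc a b ×ˢ Icc c d, |f p| ≤ C) :
    Integrable f ((volume.restrict (Ioi (0:ℝ))).prod volume) := by
  refine Integrable.mono' (g := (Icc a b ×ˢ Icc c d).indicator fun _ => C) ?_ hm ?_
  · refine (integrable_indicator_iff (measurableSet_Icc.prod measurableSet_Icc)).2
      (integrableOn_const (ne_of_lt ?_))
    rw [Measure.prod_prod]
    have h1 : volume.restrict (Ioi (0:ℝ)) (Icc a b) ≤ volume (Icc a b) := by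
      rw [Measure.restrict_apply measurableSet_Icc]
      exact measure_mono inter_subset_left
    exact ENNReal.mul_lt_top (lt_of_le_of_lt h1 measure_Icc_lt_top) measure_Icc_lt_top
  · refine ae_of_all _ fun p => ?_
    by_cases hp : p ∈ Icc a b ×ˢ Icc c d
    · rw [Real.norm_eq_abs, indicator_of_mem hp]
      exact hb p hp
    · rw [Real.norm_eq_abs, indicator_of_notMem hp, h0 p hp]
      simp



lemma exists_box {f : ℝ × ℝ → ℝ} (hcpt : HasCompactSupport f)
    (hsub : tsupport f ⊆ univ ×ˢ Ioi 0) :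
    ∃ ε T R : ℝ, 0 < ε ∧ ε ≤ T ∧ 0 < R ∧
      ∀ p ∈ tsupport f, p.2 ∈ Icc ε T ∧ p.1 ∈ Icc (-R) R := by
  set K := tsupport f with hKdef
  have hKc : IsCompact K := hcpt
  by_cases hne : K.Nonempty
  · have hKt : IsCompact (Prod.snd '' K) := hKc.image continuous_snd
    have hnet : (Prod.snd '' K).Nonempty := hne.image _
    obtain ⟨q, hq, hqe⟩ := hKt.sInf_mem hnet
    have hεpos : 0 < sInf (Prod.snd '' K) := by
      rw [← hqe]
      exact (hsub hq).2
    obtain ⟨r, hr⟩ := hKc.isBounded.subset_closedBall 0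
    refine ⟨sInf (Prod.snd '' K), sSup (Prod.snd '' K), |r| + 1, hεpos, ?_, by positivity, ?_⟩
    · exact csInf_le_csSup hnet hKt.bddBelow hKt.bddAbove
    · intro p hp
      constructor
      · exact ⟨csInf_le hKt.bddBelow ⟨p, hp, rfl⟩, le_csSup hKt.bddAbove ⟨p, hp, rfl⟩⟩
      · have hn : ‖p‖ ≤ r := mem_closedBall_zero_iff.1 (hr hp)
        have h1 : |p.1| ≤ r := le_trans (norm_fst_le p) hn
        exact abs_le.1 (le_trans h1 (by cases abs_cases r <;> linarith))
  · rw [not_nonempty_iff_eq_empty] at hne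
    exact ⟨1, 1, 1, one_pos, le_refl _, one_pos, by rw [hne]; simp⟩

variable {uL uR x₀ : ℝ}

theorem eq1 (h : uL < uR) {φ : ℝ → ℝ → ℝ}
    (hφ : ContDiff ℝ (⊤ : ℕ∞) (fun z : ℝ × ℝ => φ z.1 z.2))
    (hcpt : HasCompactSupport (fun z : ℝ × ℝ => φ z.1 z.2))
    {ε T R : ℝ} (hε : 0 < ε) (hεT : ε ≤ T) (hR : 0 < R)
    (hK : ∀ p : ℝ × ℝ, p ∈ tsupport (fun z : ℝ × ℝ => φ z.1 z.2) →
      p.2 ∈ Icc ε T ∧ p.1 ∈ Icc (-R) R) :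
    (∫ t in Ioi (0:ℝ), ∫ x : ℝ,
      (uFun uL uR x₀ x t * pdt φ x t + (uFun uL uR x₀ x t) ^ 2 / 2 * pdx φ x t)) = 0 := by
  have hM : (0:ℝ) ≤ max |uL| |uR| := le_trans (abs_nonneg uL) (le_max_left _ _)
  obtain ⟨C0, hC0⟩ := hcpt.exists_bound_of_continuous hφ.continuous
  have hPtc : Continuous (fun z : ℝ × ℝ => pdt φ z.1 z.2) := continuous_pdt2 hφ
  have hPxc : Continuous (fun z : ℝ × ℝ => pdx φ z.1 z.2) := continuous_pdx2 hφ
  have hPtcs : HasCompactSupport (fun z : ℝ × ℝ => pdt φ z.1 z.2) :=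
    HasCompactSupport.intro hcpt (fun z hz => pdt_zero hφ (by simpa using hz))
  have hPxcs : HasCompactSupport (fun z : ℝ × ℝ => pdx φ z.1 z.2) :=
    HasCompactSupport.intro hcpt (fun z hz => pdx_zero hφ (by simpa using hz))
  obtain ⟨C1, hC1⟩ := hPtcs.exists_bound_of_continuous hPtc
  obtain ⟨C2, hC2⟩ := hPxcs.exists_bound_of_continuous hPxc
  set Q : ℝ → ℝ → ℝ := fun t x =>
    uFun uL uR x₀ x t * pdt φ x t - gFun uL uR x₀ x t * φ x t with hQdef
  have hQzero : ∀ t x : ℝ, ((x, t) ∉ tsupport (fun z : ℝ × ℝ => φ z.1 z.2)) → Q t x = 0 := by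
    intro t x hnot
    rw [hQdef]
    simp only []
    rw [pdt_zero hφ hnot, phi_zero hnot, mul_zero, mul_zero, sub_zero]
  -- Step 1: integration by parts in x, for each fixed t > 0
  have hstep1 : ∀ t ∈ Ioi (0:ℝ),
      (∫ x : ℝ, (uFun uL uR x₀ x t * pdt φ x t + (uFun uL uR x₀ x t) ^ 2 / 2 * pdx φ x t))
      = ∫ x : ℝ, Q t x := by
    intro t ht
    rw [mem_Ioi] at ht
    have hmu : Measurable (fun x => uFun uL uR x₀ x t) :=
      measurable_uFun2.comp (measurable_const.prodMk measurable_id)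
    have hmg : Measurable (fun x => gFun uL uR x₀ x t) :=
      measurable_gFun2.comp (measurable_const.prodMk measurable_id)
    have hsupp1 : ∀ x : ℝ, x ∉ Icc (-R) R →
        ((x, t) ∉ tsupport (fun z : ℝ × ℝ => φ z.1 z.2)) :=
      fun x hx hmem => hx (hK _ hmem).2
    have int1 : Integrable (fun x => uFun uL uR x₀ x t * pdt φ x t) := by
      refine integrable_of_bdd_supp1 (C := max |uL| |uR| * C1) (R := R)
        (hmu.mul (hPtc.comp (continuous_id.prodMk continuous_const)).measurable).aestronglyMeasurable
        (fun x hx => by rw [pdt_zero hφ (hsupp1 x hx), mul_zero]) (fun x => ?_)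
      rw [abs_mul]
      exact mul_le_mul (uFun_abs_le h ht x)
        (by simpa [Real.norm_eq_abs] using hC1 (x, t)) (abs_nonneg _) hM
    have int2 : Integrable (fun x => (uFun uL uR x₀ x t) ^ 2 / 2 * pdx φ x t) := by
      refine integrable_of_bdd_supp1 (C := (max |uL| |uR|) ^ 2 / 2 * C2) (R := R)
        (((hmu.pow_const 2).div_const 2).mul
          (hPxc.comp (continuous_id.prodMk continuous_const)).measurable).aestronglyMeasurable
        (fun x hx => by rw [pdx_zero hφ (hsupp1 x hx), mul_zero]) (fun x => ?_)
      rw [abs_mul]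
      refine mul_le_mul ?_ (by simpa [Real.norm_eq_abs] using hC2 (x, t)) (abs_nonneg _)
        (by positivity)
      have h1 : |uFun uL uR x₀ x t| ≤ max |uL| |uR| := uFun_abs_le h ht x
      have h2 : |(uFun uL uR x₀ x t) ^ 2 / 2| = |uFun uL uR x₀ x t| ^ 2 / 2 := by
        rw [abs_div, abs_pow]
        norm_num
      rw [h2]
      nlinarith [abs_nonneg (uFun uL uR x₀ x t)]
    have int3 : Integrable (fun x => gFun uL uR x₀ x t * φ x t) := by
      refine integrable_of_bdd_supp1 (C := max |uL| |uR| / t * C0) (R := R)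
        (hmg.mul (hφ.continuous.comp (continuous_id.prodMk continuous_const)).measurable).aestronglyMeasurable
        (fun x hx => by rw [phi_zero (hsupp1 x hx), mul_zero]) (fun x => ?_)
      rw [abs_mul]
      exact mul_le_mul (gFun_abs_le ht x)
        (by simpa [Real.norm_eq_abs] using hC0 (x, t)) (abs_nonneg _) (by positivity)
    have hcontu : Continuous (fun x => uFun uL uR x₀ x t) := by
      have heq : (fun x => uFun uL uR x₀ x t) = fun x => max uL (min ((x - x₀) / t) uR) :=
        funext fun x => uFun_eq_clamp h ht x
      rw [heq]
      exact continuous_const.max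
        (((continuous_id.sub continuous_const).div_const t).min continuous_const)
    have hψx : ContDiff ℝ (⊤ : ℕ∞) (fun x => φ x t) := hφ.comp (contDiff_id.prodMk contDiff_const)
    have hsuppx : tsupport (fun x => φ x t) ⊆ Ioo (-(R + 1)) (R + 1) := by
      have hsub2 : Function.support (fun x => φ x t) ⊆ Icc (-R) R := by
        intro x hx
        by_contra hxn
        exact hx (phi_zero (hsupp1 x hxn))
      calc tsupport (fun x => φ x t) ⊆ Icc (-R) R := closure_minimal hsub2 isClosed_Icc
      _ ⊆ Ioo (-(R + 1)) (R + 1) := Icc_subset_Ioo (by linarith) (by linarith)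
    have ibpx := ibp_line (f := fun x => (uFun uL uR x₀ x t) ^ 2 / 2)
      (g := fun x => gFun uL uR x₀ x t) (ψ := fun x => φ x t)
      (s := {uL * t + x₀, uR * t + x₀})
      (((Set.finite_singleton _).insert _).countable)
      (show -(R + 1) ≤ R + 1 by linarith)
      ((hcontu.pow 2).div_const 2).continuousOn
      (fun x hx => hasDerivAt_x h ht
        (fun he => hx.2 (by rw [he]; exact mem_insert _ _))
        (fun he => hx.2 (by rw [he]; exact mem_insert_of_mem _ rfl)))
      (intervalIntegrable_of_bdd hmg (fun x _ => gFun_abs_le ht x) (by linarith))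
      hψx hsuppx
    have hpdx : (fun x => (uFun uL uR x₀ x t) ^ 2 / 2 * deriv (fun x' => φ x' t) x
        + gFun uL uR x₀ x t * φ x t)
        = fun x => (uFun uL uR x₀ x t) ^ 2 / 2 * pdx φ x t + gFun uL uR x₀ x t * φ x t := rfl
    rw [hpdx, integral_add int2 int3] at ibpx
    rw [integral_add int1 int2]
    have hsub3 : (∫ x : ℝ, Q t x)
        = (∫ x, uFun uL uR x₀ x t * pdt φ x t) - ∫ x, gFun uL uR x₀ x t * φ x t := by
      rw [hQdef]
      exact integral_sub int1 int3
    rw [hsub3]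
    linarith
  rw [setIntegral_congr_fun measurableSet_Ioi hstep1]
  -- Step 2: Fubini
  have intQ : Integrable (Function.uncurry Q) ((volume.restrict (Ioi (0:ℝ))).prod volume) := by
    refine integrable_of_bdd_supp2
      (C := max |uL| |uR| * C1 + max |uL| |uR| / ε * C0)
      (a := ε) (b := T) (c := -R) (d := R) ?_ ?_ ?_
    · refine Measurable.aestronglyMeasurable ?_
      refine Measurable.sub ?_ ?_
      · exact measurable_uFun2.mul (hPtc.comp continuous_swap).measurable
      · exact measurable_gFun2.mul (hφ.continuous.comp continuous_swap).measurable
    · intro p hp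
      refine hQzero p.1 p.2 ?_
      intro hmem
      exact hp ⟨(hK _ hmem).1, (hK _ hmem).2⟩
    · rintro ⟨t, x⟩ ⟨hp1, hp2⟩
      have ht0 : 0 < t := lt_of_lt_of_le hε hp1.1
      have hdivle : max |uL| |uR| / t ≤ max |uL| |uR| / ε := by
        rw [div_le_div_iff₀ ht0 hε]
        nlinarith [mul_nonneg hM (sub_nonneg.2 hp1.1)]
      have hb1 : |uFun uL uR x₀ x t * pdt φ x t| ≤ max |uL| |uR| * C1 := by
        rw [abs_mul]
        exact mul_le_mul (uFun_abs_le h ht0 x)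
          (by simpa [Real.norm_eq_abs] using hC1 (x, t)) (abs_nonneg _) hM
      have hb2 : |gFun uL uR x₀ x t * φ x t| ≤ max |uL| |uR| / ε * C0 := by
        rw [abs_mul]
        refine mul_le_mul ((gFun_abs_le ht0 x).trans hdivle)
          (by simpa [Real.norm_eq_abs] using hC0 (x, t)) (abs_nonneg _) (by positivity)
      calc |Function.uncurry Q (t, x)| = |uFun uL uR x₀ x t * pdt φ x t
          - gFun uL uR x₀ x t * φ x t| := rfl
      _ ≤ |uFun uL uR x₀ x t * pdt φ x t| + |gFun uL uR x₀ x t * φ x t| := abs_sub _ _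
      _ ≤ _ := add_le_add hb1 hb2
  rw [integral_integral_swap intQ]
  -- Step 3: for each x the inner t-integral vanishes
  have hinner : ∀ x : ℝ, (∫ t in Ioi (0:ℝ), Q t x) = 0 := by
    intro x
    have hzero : ∀ t : ℝ, t ∉ Ioi (0:ℝ) → Q t x = 0 := by
      intro t htn
      refine hQzero t x ?_
      intro hmem
      exact htn (lt_of_lt_of_le hε (hK _ hmem).1.1)
    rw [setIntegral_eq_integral_of_forall_compl_eq_zero hzero]
    have hsx : ContinuousOn (fun t => uFun uL uR x₀ x t) (Icc (ε / 2) (T + 1)) := by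
      have hcl : ContinuousOn (fun t => max uL (min ((x - x₀) / t) uR)) (Icc (ε / 2) (T + 1)) := by
        refine ContinuousOn.sup continuousOn_const (ContinuousOn.inf ?_ continuousOn_const)
        refine ContinuousOn.div continuousOn_const continuousOn_id ?_
        intro s hs
        exact ne_of_gt (lt_of_lt_of_le (by linarith) hs.1)
      exact hcl.congr (fun s hs => uFun_eq_clamp h (lt_of_lt_of_le (by linarith) hs.1) x)
    have hd : ∀ t ∈ Ioo (ε / 2) (T + 1) \ ({(x - x₀) / uL, (x - x₀) / uR} : Set ℝ),
        HasDerivAt (fun t' => uFun uL uR x₀ x t') (-(gFun uL uR x₀ x t)) t := by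
      intro t htm
      have ht0 : 0 < t := lt_of_lt_of_le (by linarith) htm.1.1.le
      refine hasDerivAt_t h ht0 ?_ ?_
      · intro hne heq
        refine htm.2 (mem_insert_iff.2 (Or.inl ?_))
        rw [eq_div_iff hne, mul_comm]
        linarith
      · intro hne heq
        refine htm.2 (mem_insert_iff.2 (Or.inr (mem_singleton_iff.2 ?_)))
        rw [eq_div_iff hne, mul_comm]
        linarith
    have hgi : IntervalIntegrable (fun t => -(gFun uL uR x₀ x t)) volume (ε / 2) (T + 1) := by
      refine IntervalIntegrable.neg ?_
      refine intervalIntegrable_of_bdd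
        (hm := measurable_gFun2.comp (measurable_id.prodMk measurable_const))
        (C := max |uL| |uR| / (ε / 2)) (fun s hs => ?_) (by linarith)
      have hs0 : 0 < s := lt_of_lt_of_le (by linarith) hs.1
      refine (gFun_abs_le hs0 x).trans ?_
      rw [div_le_div_iff₀ hs0 (by linarith : (0:ℝ) < ε / 2)]
      nlinarith [mul_nonneg hM (sub_nonneg.2 hs.1)]
    have hψt : ContDiff ℝ (⊤ : ℕ∞) (fun t => φ x t) := hφ.comp (contDiff_const.prodMk contDiff_id)
    have hsuppt : tsupport (fun t => φ x t) ⊆ Ioo (ε / 2) (T + 1) := by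
      have hsub2 : Function.support (fun t => φ x t) ⊆ Icc ε T := by
        intro s hscond
        by_contra hxn
        refine hscond (phi_zero ?_)
        intro hmem
        exact hxn (hK _ hmem).1
      calc tsupport (fun t => φ x t) ⊆ Icc ε T := closure_minimal hsub2 isClosed_Icc
      _ ⊆ Ioo (ε / 2) (T + 1) := Icc_subset_Ioo (by linarith) (by linarith)
    have hibp := ibp_line (f := fun t => uFun uL uR x₀ x t)
      (g := fun t => -(gFun uL uR x₀ x t)) (ψ := fun t => φ x t)
      (s := {(x - x₀) / uL, (x - x₀) / uR})
      (((Set.finite_singleton _).insert _).countable)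
      (show ε / 2 ≤ T + 1 by linarith) hsx hd hgi hψt hsuppt
    have hQeq : (fun t => Q t x) = fun t =>
        uFun uL uR x₀ x t * deriv (fun t' => φ x t') t + -(gFun uL uR x₀ x t) * φ x t := by
      funext t
      rw [hQdef]
      simp only [pdt]
      ring
    rw [hQeq]
    exact hibp
  simp only [hinner, integral_zero]

noncomputable def rFun (ρL ρR uL uR x₀ : ℝ) : ℝ → ℝ → ℝ := fun x t =>
  if x < uL * t + x₀ then ρL else if uR * t + x₀ < x then ρR else 0

theorem eq2 (h : uL < uR) (ρL ρR : ℝ) {φ : ℝ → ℝ → ℝ}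
    (hφ : ContDiff ℝ (⊤ : ℕ∞) (fun z : ℝ × ℝ => φ z.1 z.2))
    (hcpt : HasCompactSupport (fun z : ℝ × ℝ => φ z.1 z.2))
    {ε T R : ℝ} (hε : 0 < ε) (hεT : ε ≤ T) (hR : 0 < R)
    (hK : ∀ p : ℝ × ℝ, p ∈ tsupport (fun z : ℝ × ℝ => φ z.1 z.2) →
      p.2 ∈ Icc ε T ∧ p.1 ∈ Icc (-R) R) :
    (∫ t in Ioi (0:ℝ), ∫ x : ℝ,
      rFun ρL ρR uL uR x₀ x t * (pdt φ x t + uFun uL uR x₀ x t * pdx φ x t)) = 0 := by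
  have hPtc : Continuous (fun z : ℝ × ℝ => pdt φ z.1 z.2) := continuous_pdt2 hφ
  have hPxc : Continuous (fun z : ℝ × ℝ => pdx φ z.1 z.2) := continuous_pdx2 hφ
  have hPtcs : HasCompactSupport (fun z : ℝ × ℝ => pdt φ z.1 z.2) :=
    HasCompactSupport.intro hcpt (fun z hz => pdt_zero hφ (by simpa using hz))
  have hPxcs : HasCompactSupport (fun z : ℝ × ℝ => pdx φ z.1 z.2) :=
    HasCompactSupport.intro hcpt (fun z hz => pdx_zero hφ (by simpa using hz))
  obtain ⟨C1, hC1⟩ := hPtcs.exists_bound_of_continuous hPtc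
  obtain ⟨C2, hC2⟩ := hPxcs.exists_bound_of_continuous hPxc
  have hC1nn : 0 ≤ C1 := le_trans (norm_nonneg _) (hC1 (0, 0))
  have hC2nn : 0 ≤ C2 := le_trans (norm_nonneg _) (hC2 (0, 0))
  set R' : ℝ := R + (|uL| + |uR|) * T + 1 with hR'def
  set CA : ℝ := C1 + (|uL| + |uR|) * C2 with hCAdef
  have hCAnn : 0 ≤ CA := by positivity
  -- the two shifted integrands
  set QL : ℝ → ℝ → ℝ := fun t y =>
    if y < x₀ then pdt φ (y + uL * t) t + uL * pdx φ (y + uL * t) t else 0 with hQLdef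
  set QR : ℝ → ℝ → ℝ := fun t y =>
    if x₀ < y then pdt φ (y + uR * t) t + uR * pdx φ (y + uR * t) t else 0 with hQRdef
  -- generic facts about a shifted integrand, for c ∈ {uL, uR}
  have habs : ∀ c : ℝ, |c| ≤ |uL| + |uR| → ∀ x t : ℝ,
      |pdt φ x t + c * pdx φ x t| ≤ CA := by
    intro c hc x t
    calc |pdt φ x t + c * pdx φ x t| ≤ |pdt φ x t| + |c * pdx φ x t| := abs_add_le _ _
    _ ≤ C1 + (|uL| + |uR|) * C2 := by
        rw [abs_mul]
        refine add_le_add (by simpa [Real.norm_eq_abs] using hC1 (x, t)) ?_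
        exact mul_le_mul hc (by simpa [Real.norm_eq_abs] using hC2 (x, t)) (abs_nonneg _)
          (by positivity)
    _ = CA := rfl
  have hzero2 : ∀ x t : ℝ, ((x, t) ∉ tsupport (fun z : ℝ × ℝ => φ z.1 z.2)) →
      ∀ c : ℝ, pdt φ x t + c * pdx φ x t = 0 := by
    intro x t hnot c
    rw [pdt_zero hφ hnot, pdx_zero hφ hnot, mul_zero, add_zero]
  -- Step 1: rewrite the inner integral for fixed t > 0
  have hstep1 : ∀ t ∈ Ioi (0:ℝ),
      (∫ x : ℝ, rFun ρL ρR uL uR x₀ x t * (pdt φ x t + uFun uL uR x₀ x t * pdx φ x t))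
      = ρL * (∫ y : ℝ, QL t y) + ρR * (∫ y : ℝ, QR t y) := by
    intro t ht
    rw [mem_Ioi] at ht
    have hlt : uL * t + x₀ < uR * t + x₀ := by nlinarith
    have hsupp1 : ∀ x : ℝ, x ∉ Icc (-R) R →
        ((x, t) ∉ tsupport (fun z : ℝ × ℝ => φ z.1 z.2)) :=
      fun x hx hmem => hx (hK _ hmem).2
    have hALc : Continuous (fun x => pdt φ x t + uL * pdx φ x t) :=
      (hPtc.comp (continuous_id.prodMk continuous_const)).add
        (continuous_const.mul (hPxc.comp (continuous_id.prodMk continuous_const)))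
    have hARc : Continuous (fun x => pdt φ x t + uR * pdx φ x t) :=
      (hPtc.comp (continuous_id.prodMk continuous_const)).add
        (continuous_const.mul (hPxc.comp (continuous_id.prodMk continuous_const)))
    have intL : Integrable (fun x => if x < uL * t + x₀ then pdt φ x t + uL * pdx φ x t else 0) := by
      refine integrable_of_bdd_supp1 (C := CA) (R := R) ?_ ?_ ?_
      · refine (Measurable.ite ?_ hALc.measurable measurable_const).aestronglyMeasurable
        exact measurableSet_lt measurable_id measurable_const
      · intro x hx
        rw [hzero2 x t (hsupp1 x hx) uL]
        simp
      · intro x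
        split_ifs
        · exact habs uL (by cases abs_cases uR <;> cases abs_cases uL <;> linarith) x t
        · simpa using hCAnn
    have intR : Integrable (fun x => if uR * t + x₀ < x then pdt φ x t + uR * pdx φ x t else 0) := by
      refine integrable_of_bdd_supp1 (C := CA) (R := R) ?_ ?_ ?_
      · refine (Measurable.ite ?_ hARc.measurable measurable_const).aestronglyMeasurable
        exact measurableSet_lt measurable_const measurable_id
      · intro x hx
        rw [hzero2 x t (hsupp1 x hx) uR]
        simp
      · intro x
        split_ifs
        · exact habs uR (by cases abs_cases uR <;> cases abs_cases uL <;> linarith) x t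
        · simpa using hCAnn
    have hae : (fun x => rFun ρL ρR uL uR x₀ x t * (pdt φ x t + uFun uL uR x₀ x t * pdx φ x t))
        =ᵐ[volume] (fun x =>
          ρL * (if x < uL * t + x₀ then pdt φ x t + uL * pdx φ x t else 0)
          + ρR * (if uR * t + x₀ < x then pdt φ x t + uR * pdx φ x t else 0)) := by
      have hnull : volume ({uL * t + x₀, uR * t + x₀} : Set ℝ) = 0 :=
        (((Set.finite_singleton _).insert _).countable).measure_zero _
      rw [Filter.EventuallyEq, ae_iff]
      refine measure_mono_null ?_ hnull
      intro x hx
      simp only [mem_setOf_eq] at hx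
      by_contra hxs
      apply hx
      simp only [mem_insert_iff, mem_singleton_iff, not_or] at hxs
      obtain ⟨hx1, hx2⟩ := hxs
      rcases lt_trichotomy x (uL * t + x₀) with hc | hc | hc
      · have hnr : ¬ (uR * t + x₀ < x) := not_lt.2 (le_of_lt (hc.trans hlt))
        simp only [rFun, uFun, if_pos hc, if_pos hc.le, if_neg hnr]
        ring
      · exact absurd hc hx1
      · rcases lt_trichotomy x (uR * t + x₀) with hc2 | hc2 | hc2
        · have h1 : ¬ (x < uL * t + x₀) := not_lt.2 hc.le
          have h2 : ¬ (x ≤ uL * t + x₀) := not_le.2 hc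
          have h3 : ¬ (uR * t + x₀ < x) := not_lt.2 hc2.le
          simp only [rFun, uFun, if_neg h1, if_neg h2, if_neg h3]
          ring
        · exact absurd hc2 hx2
        · have h1 : ¬ (x < uL * t + x₀) := not_lt.2 (le_of_lt (hlt.trans hc2))
          have h2 : ¬ (x ≤ uL * t + x₀) := not_le.2 (hlt.trans hc2)
          simp only [rFun, uFun, if_neg h1, if_neg h2, if_pos hc2, if_pos hc2.le]
          ring
    rw [integral_congr_ae hae, integral_add (intL.const_mul ρL) (intR.const_mul ρR),
      integral_const_mul, integral_const_mul]
    congr 1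
    · congr 1
      rw [← integral_add_right_eq_self
        (fun x => if x < uL * t + x₀ then pdt φ x t + uL * pdx φ x t else 0) (uL * t)]
      congr 1
      funext y
      rw [hQLdef]
      simp only []
      simp only [show (y + uL * t < uL * t + x₀) ↔ (y < x₀) from by constructor <;> intro <;> linarith]
    · congr 1
      rw [← integral_add_right_eq_self
        (fun x => if uR * t + x₀ < x then pdt φ x t + uR * pdx φ x t else 0) (uR * t)]
      congr 1
      funext y
      rw [hQRdef]
      simp only []
      simp only [show (uR * t + x₀ < y + uR * t) ↔ (x₀ < y) from by constructor <;> intro <;> linarith]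
  rw [setIntegral_congr_fun measurableSet_Ioi hstep1]
  -- Step 2: product integrability for the two shifted integrands
  have hbox : ∀ c : ℝ, |c| ≤ |uL| + |uR| → ∀ p : ℝ × ℝ,
      p ∉ Icc ε T ×ˢ Icc (-R') R' →
      ((p.2 + c * p.1, p.1) ∉ tsupport (fun z : ℝ × ℝ => φ z.1 z.2)) := by
    intro c hc p hp hmem
    apply hp
    obtain ⟨hA, hB⟩ := hK _ hmem
    refine ⟨hA, ?_⟩
    have h1 : |p.2 + c * p.1| ≤ R := abs_le.2 hB
    have hp1 : |p.1| ≤ T := by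
      rw [abs_of_pos (lt_of_lt_of_le hε hA.1)]
      exact hA.2
    have h2 : |c * p.1| ≤ (|uL| + |uR|) * T := by
      rw [abs_mul]
      exact mul_le_mul hc hp1 (abs_nonneg _) (by positivity)
    have h3 : |p.2| ≤ R + (|uL| + |uR|) * T := by
      calc |p.2| = |(p.2 + c * p.1) - c * p.1| := by ring_nf
      _ ≤ |p.2 + c * p.1| + |c * p.1| := abs_sub _ _
      _ ≤ R + (|uL| + |uR|) * T := add_le_add h1 h2
    rw [hR'def]
    exact abs_le.1 (by linarith)
  have hucL : |uL| ≤ |uL| + |uR| := le_add_of_nonneg_right (abs_nonneg uR)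
  have hucR : |uR| ≤ |uL| + |uR| := le_add_of_nonneg_left (abs_nonneg uL)
  have intQL : Integrable (Function.uncurry QL)
      ((volume.restrict (Ioi (0:ℝ))).prod volume) := by
    refine integrable_of_bdd_supp2 (C := CA) (a := ε) (b := T) (c := -R') (d := R') ?_ ?_ ?_
    · refine (Measurable.ite (measurableSet_lt measurable_snd measurable_const) ?_
        measurable_const).aestronglyMeasurable
      have hcont : Continuous (fun p : ℝ × ℝ => (p.2 + uL * p.1, p.1)) :=
        (continuous_snd.add (continuous_const.mul continuous_fst)).prodMk continuous_fst
      exact ((hPtc.comp hcont).add (continuous_const.mul (hPxc.comp hcont))).measurable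
    · intro p hp
      show QL p.1 p.2 = 0
      rw [hQLdef]
      simp only []
      rw [hzero2 _ _ (hbox uL hucL p hp) uL]
      simp
    · intro p _
      show |QL p.1 p.2| ≤ CA
      rw [hQLdef]
      simp only []
      split_ifs
      · exact habs uL hucL _ _
      · simpa using hCAnn
  have intQR : Integrable (Function.uncurry QR)
      ((volume.restrict (Ioi (0:ℝ))).prod volume) := by
    refine integrable_of_bdd_supp2 (C := CA) (a := ε) (b := T) (c := -R') (d := R') ?_ ?_ ?_
    · refine (Measurable.ite (measurableSet_lt measurable_const measurable_snd) ?_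
        measurable_const).aestronglyMeasurable
      have hcont : Continuous (fun p : ℝ × ℝ => (p.2 + uR * p.1, p.1)) :=
        (continuous_snd.add (continuous_const.mul continuous_fst)).prodMk continuous_fst
      exact ((hPtc.comp hcont).add (continuous_const.mul (hPxc.comp hcont))).measurable
    · intro p hp
      show QR p.1 p.2 = 0
      rw [hQRdef]
      simp only []
      rw [hzero2 _ _ (hbox uR hucR p hp) uR]
      simp
    · intro p _
      show |QR p.1 p.2| ≤ CA
      rw [hQRdef]
      simp only []
      split_ifs
      · exact habs uR hucR _ _
      · simpa using hCAnn
  -- Step 3: each shifted integrand integrates to zero along characteristics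
  have hchar : ∀ (c : ℝ), |c| ≤ |uL| + |uR| → ∀ y : ℝ,
      (∫ t in Ioi (0:ℝ), (pdt φ (y + c * t) t + c * pdx φ (y + c * t) t)) = 0 := by
    intro c hc y
    have hγ : ContDiff ℝ (⊤ : ℕ∞) (fun t : ℝ => ((y + c * t : ℝ), t)) :=
      (contDiff_const.add (contDiff_const.mul contDiff_id)).prodMk contDiff_id
    have hψ : ContDiff ℝ (⊤ : ℕ∞) (fun t => φ (y + c * t) t) := hφ.comp hγ
    have hnotK : ∀ t : ℝ, t ∉ Icc ε T →
        ((y + c * t, t) ∉ tsupport (fun z : ℝ × ℝ => φ z.1 z.2)) :=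
      fun t htn hmem => htn (hK _ hmem).1
    have hzoff : ∀ t : ℝ, t ∉ Ioi (0:ℝ) →
        pdt φ (y + c * t) t + c * pdx φ (y + c * t) t = 0 := by
      intro t htn
      refine hzero2 _ _ (hnotK t ?_) c
      intro hmem
      exact htn (lt_of_lt_of_le hε hmem.1)
    rw [setIntegral_eq_integral_of_forall_compl_eq_zero hzoff]
    have hsuppψ : tsupport (fun t => φ (y + c * t) t) ⊆ Ioo (ε / 2) (T + 1) := by
      have hsub2 : Function.support (fun t => φ (y + c * t) t) ⊆ Icc ε T := by
        intro s hscond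
        by_contra hxn
        exact hscond (phi_zero (hnotK s hxn))
      calc tsupport (fun t => φ (y + c * t) t) ⊆ Icc ε T := closure_minimal hsub2 isClosed_Icc
      _ ⊆ Ioo (ε / 2) (T + 1) := Icc_subset_Ioo (by linarith) (by linarith)
    have hibp := ibp_line (f := fun _ : ℝ => (1:ℝ)) (g := fun _ : ℝ => (0:ℝ))
      (ψ := fun t => φ (y + c * t) t) (s := (∅ : Set ℝ)) countable_empty
      (show ε / 2 ≤ T + 1 by linarith) continuousOn_const
      (fun t _ => by simpa using hasDerivAt_const t (1:ℝ))
      intervalIntegrable_const hψ hsuppψ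
    have heq : (fun t => pdt φ (y + c * t) t + c * pdx φ (y + c * t) t)
        = fun t => (1:ℝ) * deriv (fun t' => φ (y + c * t') t') t + (0:ℝ) * φ (y + c * t) t := by
      funext t
      rw [(hasDerivAt_line hφ c y t).deriv]
      ring
    rw [heq]
    exact hibp
  -- Step 4: put everything together
  have hIL : Integrable (fun t => ∫ y, QL t y) (volume.restrict (Ioi (0:ℝ))) :=
    intQL.integral_prod_left
  have hIR : Integrable (fun t => ∫ y, QR t y) (volume.restrict (Ioi (0:ℝ))) :=
    intQR.integral_prod_left
  rw [integral_add (hIL.const_mul ρL) (hIR.const_mul ρR), integral_const_mul, integral_const_mul]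
  have hswapL := integral_integral_swap intQL
  have hswapR := integral_integral_swap intQR
  rw [hswapL, hswapR]
  have hinnerL : ∀ y : ℝ, (∫ t in Ioi (0:ℝ), QL t y) = 0 := by
    intro y
    by_cases hy : y < x₀
    · have : (fun t => QL t y) = fun t => pdt φ (y + uL * t) t + uL * pdx φ (y + uL * t) t := by
        funext t
        rw [hQLdef]
        simp only []
        rw [if_pos hy]
      rw [this]
      exact hchar uL hucL y
    · have : (fun t => QL t y) = fun _ => (0:ℝ) := by
        funext t
        rw [hQLdef]
        simp only []
        rw [if_neg hy]
      rw [this]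
      exact integral_zero _ _
  have hinnerR : ∀ y : ℝ, (∫ t in Ioi (0:ℝ), QR t y) = 0 := by
    intro y
    by_cases hy : x₀ < y
    · have : (fun t => QR t y) = fun t => pdt φ (y + uR * t) t + uR * pdx φ (y + uR * t) t := by
        funext t
        rw [hQRdef]
        simp only []
        rw [if_pos hy]
      rw [this]
      exact hchar uR hucR y
    · have : (fun t => QR t y) = fun _ => (0:ℝ) := by
        funext t
        rw [hQRdef]
        simp only []
        rw [if_neg hy]
      rw [this]
      exact integral_zero _ _
  simp only [hinnerL, hinnerR, integral_zero, mul_zero, add_zero]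

end RareAux

/-- **Rarefaction wave is a weak solution**: for `u_L < u_R`, the centered
rarefaction wave `u` (equal to `u_L`, `(x-x₀)/t`, `u_R` on the three regions)
with density `ρ` vanishing inside the fan is continuous in `u` on `ℝ × (0,∞)`
and solves both equations of `u_t + (u²/2)_x = 0`, `ρ_t + (ρu)_x = 0` in the
weak (distributional) sense for `t > 0`. -/
theorem rarefaction_is_weak_solution
    (uL uR ρL ρR x₀ : ℝ) (h : uL < uR) (hx₀ : 0 ≤ x₀) :
    let u : ℝ → ℝ → ℝ := fun x t =>
      if x ≤ uL * t + x₀ then uL else if uR * t + x₀ ≤ x then uR else (x - x₀) / t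
    let ρ : ℝ → ℝ → ℝ := fun x t =>
      if x < uL * t + x₀ then ρL else if uR * t + x₀ < x then ρR else 0
    ContinuousOn (fun z : ℝ × ℝ => u z.1 z.2) (univ ×ˢ Ioi 0) ∧
    ∀ φ : ℝ → ℝ → ℝ,
      ContDiff ℝ (⊤ : ℕ∞) (fun z : ℝ × ℝ => φ z.1 z.2) →
      HasCompactSupport (fun z : ℝ × ℝ => φ z.1 z.2) →
      tsupport (fun z : ℝ × ℝ => φ z.1 z.2) ⊆ univ ×ˢ Ioi 0 →
      (∫ t in Ioi (0:ℝ), ∫ x : ℝ,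
          (u x t * pdt φ x t + (u x t) ^ 2 / 2 * pdx φ x t)) = 0 ∧
      (∫ t in Ioi (0:ℝ), ∫ x : ℝ,
          ρ x t * (pdt φ x t + u x t * pdx φ x t)) = 0 := by
  intro u ρ
  refine ⟨RareAux.continuousOn_uFun h, ?_⟩
  intro φ hφ hcpt hsupp
  obtain ⟨ε, T, R, hε, hεT, hR, hK⟩ := RareAux.exists_box hcpt hsupp
  exact ⟨RareAux.eq1 h hφ hcpt hε hεT hR hK,
    RareAux.eq2 h ρL ρR hφ hcpt hε hεT hR hK⟩
end
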